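/- arXiv:2307.12958 — 4 statements merged into one kernel-verified Lean document; each statement's English description precedes it below -/
import Mathlib

section
/- Let X be an infinite-dimensional real normed space and let K ⊆ X be a nonempty closed convex set that is (r_n)-flat for a decreasing null sequence (r_n)_{n≥1} of positive reals. For ε > 0 set n(ε) = min{n ∈ ℕ : r_n ≤ ε}. Then there exists a retraction R : X → K such that (a) ‖R x − x‖ ≤ 9·dist(x, K) for all x ∈ X, and (b) for every t > 0 and all x, y ∈ X with ‖x − y‖ ≤ t one has ‖R x − R y‖ ≤ 1520·20^{n(t/20)}·t. -/
/-!
Fix a dyadic scale `σ = 2 ^ m` and `n = n(σ / 5)`. By flatness `K` lies within `σ / 5` of the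
compact set `K ∩ Eₙ`, and a maximal `σ`-separated subset `P` of it is a `σ`-net. Averaging the
points of `P` with bump weights of radius about `4σ` gives a map `V_σ` into `K` (by convexity),
defined on the `2.1σ`-neighbourhood of `K`, moving points by at most `4σ`, and Lipschitz with
constant `36 · 18 ^ n` at distances `≤ σ / 10`: since `Eₙ` is `n`-dimensional, a volume argument
shows that at most `18 ^ n` points of `P` see a given point.

Off `K`, the retraction averages the maps `V_σ` at the two dyadic scales `σ` comparable to
`dist(x, K)`, with tent-function weights forming a partition of unity in logarithmic scale.
Then `‖R x - x‖ ≤ 8 dist(x, K)`. For `‖x - y‖ ≤ t`, either `dist(x, K)` is small compared to `t`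
or to `‖x - y‖` and this displacement bound suffices, or `x` and `y` use the same three scales,
all above `t / 2`, where the local Lipschitz bounds apply with `n(σ / 5) ≤ n(t / 20)`.
-/

open Metric Set Filter Topology

noncomputable section

def clamp01 (u : ℝ) : ℝ := projIcc 0 1 zero_le_one u

theorem clamp01_nonneg (u : ℝ) : 0 ≤ clamp01 u := (projIcc 0 1 zero_le_one u).2.1

theorem clamp01_of_one_le {u : ℝ} (h : 1 ≤ u) : clamp01 u = 1 := by
  simp [clamp01, projIcc_of_right_le _ h]

theorem clamp01_of_nonpos {u : ℝ} (h : u ≤ 0) : clamp01 u = 0 := by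
  simp [clamp01, projIcc_of_le_left _ h]

theorem clamp01_of_mem {u : ℝ} (h₀ : 0 ≤ u) (h₁ : u ≤ 1) : clamp01 u = u := by
  simp [clamp01, projIcc_of_mem _ ⟨h₀, h₁⟩]

theorem clamp01_mono : Monotone clamp01 := fun _ _ h => monotone_projIcc zero_le_one h

theorem abs_clamp01_sub_clamp01_le (u v : ℝ) : |clamp01 u - clamp01 v| ≤ |u - v| := by
  have h := (LipschitzWith.projIcc (zero_le_one' ℝ)).dist_le_mul u v
  rwa [NNReal.coe_one, one_mul, Subtype.dist_eq, Real.dist_eq, Real.dist_eq] at h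

def bump {X : Type*} [PseudoMetricSpace X] (σ : ℝ) (p x : X) : ℝ :=
  clamp01 (8 - 2 * dist x p / σ)

def tent (σ s : ℝ) : ℝ := clamp01 (2 - s / σ) - clamp01 (2 - 2 * s / σ)

section Bump

variable {X : Type*} [PseudoMetricSpace X] {σ : ℝ} {P : Finset X} {x : X}

theorem bump_nonneg (σ : ℝ) (p x : X) : 0 ≤ bump σ p x := clamp01_nonneg _

theorem bump_eq_one (hσ : 0 < σ) {p : X} (h : dist x p ≤ 7 / 2 * σ) : bump σ p x = 1 := by
  refine clamp01_of_one_le ?_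
  have : 2 * dist x p / σ ≤ 7 := by rw [div_le_iff₀ hσ]; linarith
  linarith

theorem dist_lt_of_bump_ne_zero (hσ : 0 < σ) {p : X} (h : bump σ p x ≠ 0) :
    dist x p < 4 * σ := by
  contrapose! h
  refine clamp01_of_nonpos ?_
  have : 8 ≤ 2 * dist x p / σ := by rw [le_div_iff₀ hσ]; linarith
  linarith

theorem abs_bump_sub_bump_le (hσ : 0 < σ) (p x y : X) :
    |bump σ p x - bump σ p y| ≤ 2 / σ * dist x y := by
  refine (abs_clamp01_sub_clamp01_le _ _).trans ?_
  have h : 8 - 2 * dist x p / σ - (8 - 2 * dist y p / σ) = 2 / σ * (dist y p - dist x p) := by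
    field_simp; ring
  rw [h, abs_mul, abs_of_pos (by positivity : 0 < 2 / σ), dist_comm x y]
  gcongr
  exact abs_dist_sub_le y x p

theorem one_le_sum_bump (hσ : 0 < σ) {p : X} (hp : p ∈ P) (hxp : dist x p ≤ 7 / 2 * σ) :
    1 ≤ ∑ q ∈ P, bump σ q x :=
  (bump_eq_one hσ hxp).symm.le.trans (Finset.single_le_sum (fun q _ => bump_nonneg σ q x) hp)

theorem bump_div_sum_bump_nonneg (p x : X) : 0 ≤ bump σ p x / ∑ q ∈ P, bump σ q x :=
  div_nonneg (bump_nonneg σ p x) (Finset.sum_nonneg fun q _ => bump_nonneg σ q x)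

theorem sum_bump_div_sum_bump (hW : 0 < ∑ q ∈ P, bump σ q x) :
    ∑ p ∈ P, bump σ p x / ∑ q ∈ P, bump σ q x = 1 := by
  rw [← Finset.sum_div, div_self hW.ne']

end Bump

section Tent

variable {σ s : ℝ}

theorem tent_nonneg (hσ : 0 < σ) (hs : 0 ≤ s) : 0 ≤ tent σ s := by
  refine sub_nonneg.2 (clamp01_mono ?_)
  have : s / σ ≤ 2 * s / σ := by gcongr; linarith
  linarith

theorem tent_eq_zero_of_le_half (hσ : 0 < σ) (hs : s ≤ σ / 2) : tent σ s = 0 := by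
  have h₁ : s / σ ≤ 1 / 2 := by rw [div_le_iff₀ hσ]; linarith
  have h₂ : 2 * s / σ ≤ 1 := by rw [div_le_iff₀ hσ]; linarith
  rw [tent, clamp01_of_one_le (by linarith), clamp01_of_one_le (by linarith), sub_self]

theorem tent_eq_zero_of_two_mul_le (hσ : 0 < σ) (hs : 2 * σ ≤ s) : tent σ s = 0 := by
  have h₁ : 2 - s / σ ≤ 0 := by rw [sub_nonpos, le_div_iff₀ hσ]; linarith
  have h₂ : 2 - 2 * s / σ ≤ 0 := by rw [sub_nonpos, le_div_iff₀ hσ]; linarith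
  rw [tent, clamp01_of_nonpos h₁, clamp01_of_nonpos h₂, sub_self]

theorem tent_add_tent_two_mul (hσ : 0 < σ) (h₁ : σ ≤ s) (h₂ : s < 2 * σ) :
    tent σ s + tent (2 * σ) s = 1 := by
  have hlo : 1 ≤ s / σ := by rw [le_div_iff₀ hσ]; linarith
  have hhi : s / σ < 2 := by rw [div_lt_iff₀ hσ]; linarith
  have e₁ : 2 * s / (2 * σ) = s / σ := by field_simp
  have e₂ : 2 * s / σ = 2 * (s / σ) := by ring
  have e₃ : s / (2 * σ) = s / σ / 2 := by field_simp
  rw [tent, tent, e₁, e₂, e₃, clamp01_of_mem (by linarith) (by linarith),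
    clamp01_of_nonpos (by linarith), clamp01_of_one_le (by linarith)]
  ring

theorem abs_tent_sub_tent_le (hσ : 0 < σ) (s s' : ℝ) :
    |tent σ s - tent σ s'| ≤ 3 / σ * |s - s'| := by
  have h₁ := abs_clamp01_sub_clamp01_le (2 - s / σ) (2 - s' / σ)
  have h₂ := abs_clamp01_sub_clamp01_le (2 - 2 * s / σ) (2 - 2 * s' / σ)
  rw [show 2 - s / σ - (2 - s' / σ) = (s' - s) / σ by ring, abs_div, abs_of_pos hσ,
    abs_sub_comm s'] at h₁
  rw [show 2 - 2 * s / σ - (2 - 2 * s' / σ) = 2 * (s' - s) / σ by ring, abs_div,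
    abs_of_pos hσ, abs_mul, abs_two, abs_sub_comm s'] at h₂
  calc |tent σ s - tent σ s'|
      ≤ |clamp01 (2 - s / σ) - clamp01 (2 - s' / σ)|
        + |clamp01 (2 - 2 * s / σ) - clamp01 (2 - 2 * s' / σ)| := by
        rw [show tent σ s - tent σ s' = (clamp01 (2 - s / σ) - clamp01 (2 - s' / σ))
          - (clamp01 (2 - 2 * s / σ) - clamp01 (2 - 2 * s' / σ)) by unfold tent; ring]
        exact abs_sub _ _
    _ ≤ |s - s'| / σ + 2 * |s - s'| / σ := add_le_add h₁ h₂
    _ = 3 / σ * |s - s'| := by ring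

theorem zpow_log_le (hs : 0 < s) : (2 : ℝ) ^ Int.log 2 s ≤ s := by
  simpa using Int.zpow_log_le_self (R := ℝ) one_lt_two hs

theorem lt_two_mul_zpow_log (s : ℝ) : s < 2 * (2 : ℝ) ^ Int.log 2 s := by
  have h := Int.lt_zpow_succ_log_self (R := ℝ) one_lt_two s
  rwa [zpow_add_one₀ (by norm_num), Nat.cast_ofNat, mul_comm] at h

theorem zpow_bounds_of_mem_pair (hs : 0 < s) {m : ℤ}
    (hm : m ∈ ({Int.log 2 s, Int.log 2 s + 1} : Finset ℤ)) :
    s / 2 < (2 : ℝ) ^ m ∧ (2 : ℝ) ^ m ≤ 2 * s := by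
  have h₁ := zpow_log_le hs
  have h₂ := lt_two_mul_zpow_log s
  rcases Finset.mem_insert.1 hm with rfl | hm
  · constructor <;> linarith
  · rw [Finset.mem_singleton.1 hm, zpow_add_one₀ two_ne_zero]
    constructor <;> linarith

theorem pair_log_subset_Icc_log (hs : 0 < s) {s' : ℝ} (hss' : s ≤ s')
    (hs' : s' < 4 * 2 ^ Int.log 2 s) :
    {Int.log 2 s', Int.log 2 s' + 1} ⊆ Finset.Icc (Int.log 2 s) (Int.log 2 s + 2) := by
  have h₁ : Int.log 2 s ≤ Int.log 2 s' := Int.log_mono_right hs hss'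
  have h₂ : Int.log 2 s' < Int.log 2 s + 2 := by
    refine (Int.lt_zpow_iff_log_lt one_lt_two (hs.trans_le hss')).1 ?_
    rw [Nat.cast_ofNat, zpow_add₀ two_ne_zero]
    norm_num
    linarith
  intro m hm
  simp only [Finset.mem_insert, Finset.mem_singleton] at hm
  rw [Finset.mem_Icc]
  omega

theorem tent_zpow_eq_zero (hs : 0 < s) {m : ℤ} (h₁ : m ≠ Int.log 2 s)
    (h₂ : m ≠ Int.log 2 s + 1) : tent (2 ^ m) s = 0 := by
  rcases h₁.lt_or_gt with hm | hm
  · refine tent_eq_zero_of_two_mul_le (by positivity) ?_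
    calc 2 * (2 : ℝ) ^ m = 2 ^ (m + 1) := by rw [zpow_add_one₀ two_ne_zero, mul_comm]
      _ ≤ 2 ^ Int.log 2 s := zpow_le_zpow_right₀ one_le_two (by omega)
      _ ≤ s := zpow_log_le hs
  · refine tent_eq_zero_of_le_half (by positivity) ?_
    calc s ≤ 2 * (2 : ℝ) ^ Int.log 2 s := (lt_two_mul_zpow_log s).le
      _ = 2 ^ (Int.log 2 s + 1) := by rw [zpow_add_one₀ two_ne_zero, mul_comm]
      _ ≤ 2 ^ (m - 1) := zpow_le_zpow_right₀ one_le_two (by omega)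
      _ = 2 ^ m / 2 := by rw [zpow_sub_one₀ two_ne_zero, div_eq_mul_inv]

theorem sum_tent_zpow_smul_eq {M : Type*} [AddCommMonoid M] [Module ℝ M] (hs : 0 < s)
    {S : Finset ℤ} (hS : {Int.log 2 s, Int.log 2 s + 1} ⊆ S) (f : ℤ → M) :
    ∑ m ∈ S, tent (2 ^ m) s • f m
      = ∑ m ∈ {Int.log 2 s, Int.log 2 s + 1}, tent (2 ^ m) s • f m := by
  refine (Finset.sum_subset hS fun m _ hm => ?_).symm
  simp only [Finset.mem_insert, Finset.mem_singleton, not_or] at hm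
  rw [tent_zpow_eq_zero hs hm.1 hm.2, zero_smul]

theorem sum_tent_zpow (hs : 0 < s) {S : Finset ℤ} (hS : {Int.log 2 s, Int.log 2 s + 1} ⊆ S) :
    ∑ m ∈ S, tent (2 ^ m) s = 1 := by
  have h := sum_tent_zpow_smul_eq hs hS fun _ => (1 : ℝ)
  simp only [smul_eq_mul, mul_one] at h
  rw [h, Finset.sum_pair (by omega), zpow_add_one₀ two_ne_zero, mul_comm _ 2]
  exact tent_add_tent_two_mul (by positivity) (zpow_log_le hs) (lt_two_mul_zpow_log s)

end Tent

section ConvexCombination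

variable {ι E : Type*} [SeminormedAddCommGroup E] [NormedSpace ℝ E] (s : Finset ι)

theorem norm_sum_smul_sub_sum_smul_le {a b : ι → ℝ} (ha₀ : ∀ i ∈ s, 0 ≤ a i)
    (ha : ∑ i ∈ s, a i = 1) (hb : ∑ i ∈ s, b i = 1) (f g : ι → E) (v : E) :
    ‖∑ i ∈ s, a i • f i - ∑ i ∈ s, b i • g i‖
      ≤ ∑ i ∈ s, a i * ‖f i - g i‖ + ∑ i ∈ s, |a i - b i| * ‖g i - v‖ := by
  have key : ∑ i ∈ s, a i • f i - ∑ i ∈ s, b i • g i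
      = ∑ i ∈ s, a i • (f i - g i) + ∑ i ∈ s, (a i - b i) • (g i - v) := by
    simp only [smul_sub, sub_smul, Finset.sum_sub_distrib]
    rw [← Finset.sum_smul, ← Finset.sum_smul, ha, hb]
    abel
  rw [key]
  refine (norm_add_le _ _).trans (add_le_add ?_ ?_) <;>
    refine (norm_sum_le _ _).trans (Finset.sum_le_sum fun i hi => ?_) <;>
    rw [norm_smul, Real.norm_eq_abs]
  rw [abs_of_nonneg (ha₀ i hi)]

theorem norm_sum_smul_sub_le {w : ι → ℝ} (hw₀ : ∀ i ∈ s, 0 ≤ w i) (hw : ∑ i ∈ s, w i = 1)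
    (f : ι → E) (v : E) : ‖∑ i ∈ s, w i • f i - v‖ ≤ ∑ i ∈ s, w i * ‖f i - v‖ := by
  simpa [← Finset.sum_smul, hw] using norm_sum_smul_sub_sum_smul_le s hw₀ hw hw f (fun _ => v) v

theorem sum_abs_div_sum_sub_div_sum_le {a b : ι → ℝ} (hb₀ : ∀ i ∈ s, 0 ≤ b i)
    (ha : 1 ≤ ∑ i ∈ s, a i) (hb : 0 < ∑ i ∈ s, b i) :
    ∑ i ∈ s, |a i / ∑ j ∈ s, a j - b i / ∑ j ∈ s, b j| ≤ 2 * ∑ i ∈ s, |a i - b i| := by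
  set A := ∑ j ∈ s, a j
  set B := ∑ j ∈ s, b j
  have hA : 0 < A := one_pos.trans_le ha
  have hAB : |A - B| ≤ ∑ i ∈ s, |a i - b i| := by
    rw [← Finset.sum_sub_distrib]
    exact Finset.abs_sum_le_sum_abs _ _
  have hterm : ∀ i ∈ s, |a i / A - b i / B| ≤ |a i - b i| + b i / B * |A - B| := by
    intro i hi
    have hbB : 0 ≤ b i / B := div_nonneg (hb₀ i hi) hb.le
    have e : a i / A - b i / B = (a i - b i) / A + b i / B * ((B - A) / A) := by
      field_simp; ring
    rw [e]
    refine (abs_add_le _ _).trans (add_le_add ?_ ?_)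
    · rw [abs_div, abs_of_pos hA]
      exact div_le_self (abs_nonneg _) ha
    · rw [abs_mul, abs_of_nonneg hbB, abs_div, abs_of_pos hA, abs_sub_comm]
      exact mul_le_mul_of_nonneg_left (div_le_self (abs_nonneg _) ha) hbB
  calc ∑ i ∈ s, |a i / A - b i / B|
      ≤ ∑ i ∈ s, (|a i - b i| + b i / B * |A - B|) := Finset.sum_le_sum hterm
    _ = ∑ i ∈ s, |a i - b i| + |A - B| := by
      rw [Finset.sum_add_distrib, ← Finset.sum_mul, ← Finset.sum_div, div_self hb.ne', one_mul]
    _ ≤ 2 * ∑ i ∈ s, |a i - b i| := by linarith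

end ConvexCombination

open scoped ENNReal in
open MeasureTheory Module in
theorem card_le_of_separated_of_forall_dist_le {E : Type*} [NormedAddCommGroup E] [NormedSpace ℝ E]
    [FiniteDimensional ℝ E] {s : Finset E} {c : E} {δ ρ : ℝ} (hδ : 0 < δ) (hρ : 0 ≤ ρ)
    (hs : ∀ p ∈ s, dist p c ≤ ρ) (hsep : (s : Set E).Pairwise fun p q => δ ≤ dist p q) :
    (s.card : ℝ) ≤ ((2 * ρ + δ) / δ) ^ finrank ℝ E := by
  borelize E
  set μ : Measure E := Measure.addHaar
  have hdisj : (s : Set E).PairwiseDisjoint fun p => ball p (δ / 2) := fun p hp q hq hpq =>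
    ball_disjoint_ball (by linarith [hsep hp hq hpq])
  have hsub : ⋃ p ∈ s, ball p (δ / 2) ⊆ ball c (ρ + δ / 2) :=
    iUnion₂_subset fun p hp => ball_subset_ball' (by linarith [hs p hp])
  have hvol : (s.card : ℝ≥0∞) * ENNReal.ofReal ((δ / 2) ^ finrank ℝ E) * μ (ball 0 1)
      ≤ ENNReal.ofReal ((ρ + δ / 2) ^ finrank ℝ E) * μ (ball 0 1) :=
    calc _ = μ (⋃ p ∈ s, ball p (δ / 2)) := by
          rw [measure_biUnion_finset hdisj fun p _ => measurableSet_ball]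
          simp only [μ.addHaar_ball_of_pos _ (half_pos hδ), Finset.sum_const, nsmul_eq_mul,
            mul_assoc]
      _ ≤ μ (ball c (ρ + δ / 2)) := measure_mono hsub
      _ = _ := μ.addHaar_ball_of_pos _ (by positivity)
  have hvol' := (ENNReal.mul_le_mul_iff_left (measure_ball_pos μ 0 one_pos).ne'
    measure_ball_lt_top.ne).1 hvol
  rw [← ENNReal.ofReal_natCast, ← ENNReal.ofReal_mul (by positivity),
    ENNReal.ofReal_le_ofReal_iff (by positivity)] at hvol'
  rw [show (2 * ρ + δ) / δ = (ρ + δ / 2) / (δ / 2) by field_simp, div_pow,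
    le_div_iff₀ (by positivity)]
  exact hvol'

open scoped ENNReal NNReal in
theorem IsCompact.exists_finset_separated_net {X : Type*} [PseudoMetricSpace X] {C : Set X}
    (hC : IsCompact C) {σ : ℝ} (hσ : 0 < σ) :
    ∃ P : Finset X, ↑P ⊆ C ∧ (∀ z ∈ C, ∃ p ∈ P, dist z p ≤ σ) ∧
      (P : Set X).Pairwise fun p q => σ ≤ dist p q := by
  lift σ to ℝ≥0 using hσ.le
  have hfin : packingNumber σ C ≠ ⊤ := by
    obtain ⟨N, -, hNfin, hN⟩ :=
      exists_finite_isCover_of_isCompact (ε := σ / 2) (div_pos (NNReal.coe_pos.1 hσ) two_pos).ne' hC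
    refine ne_top_of_le_ne_top (Set.encard_ne_top_iff.2 hNfin) ?_
    calc packingNumber σ C = packingNumber (2 * (σ / 2)) C := by rw [mul_div_cancel₀ _ two_ne_zero]
      _ ≤ externalCoveringNumber (σ / 2) C := packingNumber_two_mul_le_externalCoveringNumber _ _
      _ ≤ N.encard := hN.externalCoveringNumber_le_encard
  have hNfin : (maximalSeparatedSet σ C).Finite := by
    rw [← Set.encard_ne_top_iff, encard_maximalSeparatedSet hfin]
    exact hfin
  refine ⟨hNfin.toFinset, by simpa using maximalSeparatedSet_subset, fun z hz => ?_, ?_⟩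
  · obtain ⟨p, hp, hzp⟩ := mem_iUnion₂.1
      (isCover_iff_subset_iUnion_closedBall.1 (isCover_maximalSeparatedSet hfin) hz)
    exact ⟨p, hNfin.mem_toFinset.2 hp, hzp⟩
  · intro p hp q hq hpq
    have h : (σ : ℝ≥0∞) < edist p q := isSeparated_maximalSeparatedSet (ε := σ) (A := C)
      (hNfin.mem_toFinset.1 hp) (hNfin.mem_toFinset.1 hq) hpq
    rw [edist_nndist, ENNReal.coe_lt_coe, ← NNReal.coe_lt_coe, coe_nndist] at h
    exact h.le

theorem nonempty_setOf_le_of_tendsto_zero {r : ℕ → ℝ} (hr : Tendsto r atTop (𝓝 0)) {ε : ℝ}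
    (hε : 0 < ε) : {n : ℕ | 1 ≤ n ∧ r n ≤ ε}.Nonempty := by
  obtain ⟨N, hN⟩ := eventually_atTop.1 (hr.eventually (ge_mem_nhds hε))
  exact ⟨max N 1, le_max_right _ _, hN _ (le_max_left _ _)⟩

section Retraction

variable {X : Type*} [NormedAddCommGroup X]

/-- The margin `2.1 * σ` rather than `2 * σ` lets nearby points share their dyadic scales in
`dyadicBlend`. -/
structure IsScaleRetraction (K : Set X) (σ L : ℝ) (V : X → X) : Prop where
  mem : ∀ x, infDist x K ≤ 2.1 * σ → V x ∈ K
  norm_sub_le : ∀ x, infDist x K ≤ 2.1 * σ → ‖V x - x‖ ≤ 4 * σ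
  norm_map_sub_map_le : ∀ x y, infDist x K ≤ 2.1 * σ → infDist y K ≤ 2.1 * σ →
    dist x y ≤ σ / 10 → ‖V x - V y‖ ≤ L * dist x y

theorem IsScaleRetraction.abs_tent_sub_tent_mul_norm_sub_le {K : Set X} {σ L : ℝ}
    {V : X → X} (hV : IsScaleRetraction K σ L V) (hσ : 0 < σ) {v : X}
    (hv : infDist v K ≤ 2.1 * σ) (a b : ℝ) :
    |tent σ a - tent σ b| * ‖V v - v‖ ≤ 12 * |a - b| :=
  calc |tent σ a - tent σ b| * ‖V v - v‖ ≤ (3 / σ * |a - b|) * (4 * σ) :=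
        mul_le_mul (abs_tent_sub_tent_le hσ a b) (hV.norm_sub_le v hv) (norm_nonneg _)
          (by positivity)
    _ = 12 * |a - b| := by field_simp; ring

variable [NormedSpace ℝ X]

theorem card_le_of_separated_of_mem_submodule {E : Submodule ℝ X} [FiniteDimensional ℝ E]
    {s : Finset X} (hsE : ∀ p ∈ s, p ∈ E) {δ D : ℝ} (hδ : 0 < δ) (hD : 0 ≤ D)
    (hsep : (s : Set X).Pairwise fun p q => δ ≤ dist p q)
    (hdiam : ∀ p ∈ s, ∀ q ∈ s, dist p q ≤ D) :
    (s.card : ℝ) ≤ ((2 * D + δ) / δ) ^ Module.finrank ℝ E := by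
  classical
  rcases s.eq_empty_or_nonempty with rfl | ⟨p₀, hp₀⟩
  · rw [Finset.card_empty, Nat.cast_zero]
    positivity
  have hcard : (s.subtype (· ∈ E)).card = s.card := by
    rw [Finset.card_subtype, Finset.filter_true_of_mem hsE]
  rw [← hcard]
  refine card_le_of_separated_of_forall_dist_le (c := ⟨p₀, hsE p₀ hp₀⟩) hδ hD
    (fun p hp => hdiam _ (Finset.mem_subtype.1 hp) _ hp₀) ?_
  intro p hp q hq hpq
  exact hsep (Finset.mem_subtype.1 hp) (Finset.mem_subtype.1 hq) (Subtype.coe_injective.ne hpq)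

def netAverage (σ : ℝ) (P : Finset X) (x : X) : X :=
  ∑ p ∈ P, (bump σ p x / ∑ q ∈ P, bump σ q x) • p

section NetAverage

variable {σ : ℝ} {P : Finset X} {x y : X}

theorem netAverage_mem {K : Set X} (hK : Convex ℝ K) (hPK : ↑P ⊆ K)
    (hW : 0 < ∑ q ∈ P, bump σ q x) : netAverage σ P x ∈ K :=
  hK.sum_mem (fun p _ => bump_div_sum_bump_nonneg p x) (sum_bump_div_sum_bump hW)
    fun _ hp => hPK hp

theorem norm_netAverage_sub_le (hσ : 0 < σ) (hW : 0 < ∑ q ∈ P, bump σ q x) :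
    ‖netAverage σ P x - x‖ ≤ 4 * σ := by
  refine (norm_sum_smul_sub_le P (fun p _ => bump_div_sum_bump_nonneg p x)
    (sum_bump_div_sum_bump hW) (fun p => p) x).trans ?_
  have hterm : ∀ p ∈ P, (bump σ p x / ∑ q ∈ P, bump σ q x) * ‖p - x‖
      ≤ (bump σ p x / ∑ q ∈ P, bump σ q x) * (4 * σ) := by
    intro p _
    by_cases h : bump σ p x = 0
    · simp [h]
    · refine mul_le_mul_of_nonneg_left ?_ (bump_div_sum_bump_nonneg p x)
      rw [← dist_eq_norm, dist_comm]
      exact (dist_lt_of_bump_ne_zero hσ h).le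
  refine (Finset.sum_le_sum hterm).trans_eq ?_
  rw [← Finset.sum_mul, sum_bump_div_sum_bump hW, one_mul]

theorem norm_netAverage_sub_netAverage_le (hσ : 0 < σ) (hWx : 1 ≤ ∑ q ∈ P, bump σ q x)
    (hWy : 1 ≤ ∑ q ∈ P, bump σ q y) (hxy : dist x y ≤ σ / 10) :
    ‖netAverage σ P x - netAverage σ P y‖ ≤ 18 * σ * ∑ p ∈ P, |bump σ p x - bump σ p y| := by
  set w : X → X → ℝ := fun z p => bump σ p z / ∑ q ∈ P, bump σ q z
  have hWy' : 0 < ∑ q ∈ P, bump σ q y := one_pos.trans_le hWy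
  have h := norm_sum_smul_sub_sum_smul_le P (fun p _ => bump_div_sum_bump_nonneg p x)
    (sum_bump_div_sum_bump (one_pos.trans_le hWx)) (sum_bump_div_sum_bump hWy')
    (fun p => p) (fun p => p) (netAverage σ P y)
  simp only [sub_self, norm_zero, mul_zero, Finset.sum_const_zero, zero_add] at h
  refine h.trans ?_
  have hterm : ∀ p ∈ P,
      |w x p - w y p| * ‖p - netAverage σ P y‖ ≤ |w x p - w y p| * (9 * σ) := by
    intro p _
    by_cases h0 : bump σ p x = 0 ∧ bump σ p y = 0
    · simp [w, h0]
    have hyp : dist y p < 4.1 * σ := by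
      rcases not_and_or.1 h0 with hx | hy
      · linarith [dist_lt_of_bump_ne_zero hσ hx, dist_triangle y x p, dist_comm x y]
      · linarith [dist_lt_of_bump_ne_zero hσ hy]
    refine mul_le_mul_of_nonneg_left ?_ (abs_nonneg _)
    calc ‖p - netAverage σ P y‖ ≤ ‖p - y‖ + ‖netAverage σ P y - y‖ := by
          rw [norm_sub_rev (netAverage σ P y)]
          exact norm_sub_le_norm_sub_add_norm_sub _ _ _
      _ ≤ 4.1 * σ + 4 * σ := by
        gcongr
        · rw [← dist_eq_norm, dist_comm]
          exact hyp.le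
        · exact norm_netAverage_sub_le hσ hWy'
      _ ≤ 9 * σ := by linarith
  calc ∑ p ∈ P, |w x p - w y p| * ‖p - netAverage σ P y‖
      ≤ ∑ p ∈ P, |w x p - w y p| * (9 * σ) := Finset.sum_le_sum hterm
    _ ≤ (2 * ∑ p ∈ P, |bump σ p x - bump σ p y|) * (9 * σ) := by
      rw [← Finset.sum_mul]
      gcongr
      exact sum_abs_div_sum_sub_div_sum_le P (fun p _ => bump_nonneg σ p y) hWx hWy'
    _ = 18 * σ * ∑ p ∈ P, |bump σ p x - bump σ p y| := by ring

theorem sum_abs_bump_sub_bump_le {E : Submodule ℝ X} [FiniteDimensional ℝ E] (hσ : 0 < σ)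
    (hPE : ∀ p ∈ P, p ∈ E) (hsep : (P : Set X).Pairwise fun p q => σ ≤ dist p q)
    (hxy : dist x y ≤ σ / 10) :
    ∑ p ∈ P, |bump σ p x - bump σ p y| ≤ 18 ^ Module.finrank ℝ E * (2 / σ) * dist x y := by
  classical
  set A := P.filter fun p => dist x p < 4.1 * σ
  have hsum : ∑ p ∈ A, |bump σ p x - bump σ p y| = ∑ p ∈ P, |bump σ p x - bump σ p y| := by
    refine Finset.sum_filter_of_ne fun p _ hne => ?_
    by_cases hx : bump σ p x = 0
    · have hy : bump σ p y ≠ 0 := fun hy => hne (by rw [hx, hy, sub_self, abs_zero])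
      linarith [dist_lt_of_bump_ne_zero hσ hy, dist_triangle x y p]
    · linarith [dist_lt_of_bump_ne_zero hσ hx]
  have hcard : (A.card : ℝ) ≤ 18 ^ Module.finrank ℝ E := by
    refine (card_le_of_separated_of_mem_submodule (fun p hp => hPE p (Finset.mem_filter.1 hp).1) hσ
      (by positivity : 0 ≤ 8.2 * σ) (hsep.mono (Finset.coe_subset.2 (Finset.filter_subset _ _)))
      fun p hp q hq => ?_).trans ?_
    · have := (Finset.mem_filter.1 hp).2
      have := (Finset.mem_filter.1 hq).2
      linarith [dist_triangle p x q, dist_comm p x]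
    · refine pow_le_pow_left₀ (by positivity) ?_ _
      rw [div_le_iff₀ hσ]
      linarith
  rw [← hsum]
  calc ∑ p ∈ A, |bump σ p x - bump σ p y| ≤ ∑ p ∈ A, 2 / σ * dist x y :=
        Finset.sum_le_sum fun p _ => abs_bump_sub_bump_le hσ p x y
    _ = A.card * (2 / σ * dist x y) := by rw [Finset.sum_const, nsmul_eq_mul]
    _ ≤ 18 ^ Module.finrank ℝ E * (2 / σ * dist x y) := by gcongr
    _ = _ := by ring

end NetAverage

theorem exists_isScaleRetraction {K : Set X} (hK : Convex ℝ K) {E : Submodule ℝ X}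
    [FiniteDimensional ℝ E] {σ : ℝ} (hσ : 0 < σ) (hC : IsCompact (K ∩ (E : Set X)))
    (hCne : (K ∩ (E : Set X)).Nonempty)
    (happrox : ∀ x ∈ K, infDist x (K ∩ (E : Set X)) ≤ σ / 5) :
    ∃ V : X → X, IsScaleRetraction K σ (36 * 18 ^ Module.finrank ℝ E) V := by
  obtain ⟨P, hPC, hPnet, hPsep⟩ := hC.exists_finset_separated_net hσ
  have hW : ∀ x, infDist x K ≤ 2.1 * σ → 1 ≤ ∑ p ∈ P, bump σ p x := by
    intro x hx
    obtain ⟨w, hwK, hxw⟩ := (infDist_lt_iff (hCne.mono inter_subset_left)).1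
      (hx.trans_lt (by linarith : 2.1 * σ < 2.2 * σ))
    obtain ⟨c, hcC, hwc⟩ :=
      (infDist_lt_iff hCne).1 ((happrox w hwK).trans_lt (by linarith : σ / 5 < σ / 4))
    obtain ⟨p, hp, hcp⟩ := hPnet c hcC
    exact one_le_sum_bump hσ hp (by linarith [dist_triangle4 x w c p])
  refine ⟨netAverage σ P, ⟨fun x hx => ?_, fun x hx => ?_, fun x y hx hy hxy => ?_⟩⟩
  · exact netAverage_mem hK (hPC.trans inter_subset_left) (one_pos.trans_le (hW x hx))
  · exact norm_netAverage_sub_le hσ (one_pos.trans_le (hW x hx))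
  calc ‖netAverage σ P x - netAverage σ P y‖
      ≤ 18 * σ * ∑ p ∈ P, |bump σ p x - bump σ p y| :=
        norm_netAverage_sub_netAverage_le hσ (hW x hx) (hW y hy) hxy
    _ ≤ 18 * σ * (18 ^ Module.finrank ℝ E * (2 / σ) * dist x y) := by
        gcongr
        exact sum_abs_bump_sub_bump_le hσ (fun p hp => (hPC hp).2) hPsep hxy
    _ = 36 * 18 ^ Module.finrank ℝ E * dist x y := by field_simp; ring

theorem exists_isScaleRetraction_of_flat {K : Set X} (hK : Convex ℝ K) {r : ℕ → ℝ}
    (hr : Tendsto r atTop (𝓝 0)) {E : ℕ → Submodule ℝ X}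
    (hE : ∀ n : ℕ, 1 ≤ n → Module.finrank ℝ (E n) = n ∧ (K ∩ (E n : Set X)).Nonempty ∧
      IsCompact (K ∩ (E n : Set X)) ∧ ∀ x ∈ K, infDist x (K ∩ (E n : Set X)) ≤ r n)
    {σ : ℝ} (hσ : 0 < σ) :
    ∃ V : X → X, IsScaleRetraction K σ (36 * 18 ^ sInf {n : ℕ | 1 ≤ n ∧ r n ≤ σ / 5}) V := by
  obtain ⟨hn, hrn⟩ :=
    Nat.sInf_mem (nonempty_setOf_le_of_tendsto_zero hr (by positivity : 0 < σ / 5))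
  obtain ⟨hrank, hne, hcpt, happrox⟩ := hE _ hn
  have : FiniteDimensional ℝ (E _) := Module.finite_of_finrank_pos (hrank ▸ hn)
  rw [← hrank]
  exact exists_isScaleRetraction hK hσ hcpt hne fun x hx => (happrox x hx).trans hrn

open Classical in
def dyadicBlend (K : Set X) (V : ℤ → X → X) (x : X) : X :=
  if x ∈ K then x else
    ∑ m ∈ {Int.log 2 (infDist x K), Int.log 2 (infDist x K) + 1},
      tent (2 ^ m) (infDist x K) • V m x

section DyadicBlend

variable {K : Set X} {V : ℤ → X → X} {L : ℤ → ℝ}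

theorem dyadicBlend_of_mem {x : X} (hx : x ∈ K) : dyadicBlend K V x = x := if_pos hx

theorem dyadicBlend_eq_sum {x : X} (hx : x ∉ K) (hd : 0 < infDist x K) {S : Finset ℤ}
    (hS : {Int.log 2 (infDist x K), Int.log 2 (infDist x K) + 1} ⊆ S) :
    dyadicBlend K V x = ∑ m ∈ S, tent (2 ^ m) (infDist x K) • V m x := by
  rw [dyadicBlend, if_neg hx, sum_tent_zpow_smul_eq hd hS]

variable (hV : ∀ m, IsScaleRetraction K (2 ^ m) (L m) (V m))
include hV

theorem norm_dyadicBlend_sub_dyadicBlend_le_of_near {L₀ : ℝ} {u v : X}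
    (hdist : infDist u K ≤ infDist v K) (hnear : 20 * ‖u - v‖ < infDist u K)
    (hL : ∀ m : ℤ, infDist u K / 2 < 2 ^ m → L m ≤ L₀) :
    ‖dyadicBlend K V u - dyadicBlend K V v‖ ≤ (L₀ + 36) * ‖u - v‖ := by
  set du := infDist u K
  set dv := infDist v K
  have hdu : 0 < du := by linarith [norm_nonneg (u - v)]
  have hdv : 0 < dv := hdu.trans_le hdist
  have hdv' : dv ≤ du + ‖u - v‖ := by
    simpa [dist_eq_norm, norm_sub_rev] using infDist_le_infDist_add_dist (x := v) (y := u) (s := K)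
  have hd : |du - dv| ≤ ‖u - v‖ := abs_sub_le_iff.2 ⟨by linarith, by linarith⟩
  set k := Int.log 2 du
  have hk₁ : (2 : ℝ) ^ k ≤ du := zpow_log_le hdu
  have hk₂ : du < 2 * (2 : ℝ) ^ k := lt_two_mul_zpow_log du
  set S := Finset.Icc k (k + 2)
  have hSu : {k, k + 1} ⊆ S := pair_log_subset_Icc_log hdu le_rfl (by linarith)
  have hSv : {Int.log 2 dv, Int.log 2 dv + 1} ⊆ S :=
    pair_log_subset_Icc_log hdu hdist (by linarith)
  have hscale : ∀ m ∈ S, (2 : ℝ) ^ k ≤ 2 ^ m := fun m hm =>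
    zpow_le_zpow_right₀ one_le_two (Finset.mem_Icc.1 hm).1
  rw [dyadicBlend_eq_sum (fun h => hdu.ne' (infDist_zero_of_mem h)) hdu hSu,
    dyadicBlend_eq_sum (fun h => hdv.ne' (infDist_zero_of_mem h)) hdv hSv]
  refine (norm_sum_smul_sub_sum_smul_le S (fun m _ => tent_nonneg (by positivity) hdu.le)
    (sum_tent_zpow hdu hSu) (sum_tent_zpow hdv hSv) _ _ v).trans ?_
  have h₁ : ∀ m ∈ S,
      tent (2 ^ m) du * ‖V m u - V m v‖ ≤ tent (2 ^ m) du * (L₀ * ‖u - v‖) := by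
    intro m hm
    have := hscale m hm
    refine mul_le_mul_of_nonneg_left ?_ (tent_nonneg (by positivity) hdu.le)
    refine ((hV m).norm_map_sub_map_le u v (by linarith) (by linarith)
      (by rw [dist_eq_norm]; linarith)).trans ?_
    rw [dist_eq_norm]
    exact mul_le_mul_of_nonneg_right (hL m (by linarith)) (norm_nonneg _)
  have h₂ : ∀ m ∈ S, |tent (2 ^ m) du - tent (2 ^ m) dv| * ‖V m v - v‖ ≤ 12 * ‖u - v‖ :=
    fun m hm => ((hV m).abs_tent_sub_tent_mul_norm_sub_le (by positivity)
      (by linarith [hscale m hm]) du dv).trans (by linarith)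
  have hcard : S.card = 3 := by simp [S, show k + 2 + 1 - k = 3 by ring]
  calc _ ≤ ∑ m ∈ S, tent (2 ^ m) du * (L₀ * ‖u - v‖) + ∑ m ∈ S, 12 * ‖u - v‖ :=
        add_le_add (Finset.sum_le_sum h₁) (Finset.sum_le_sum h₂)
    _ = (L₀ + 36) * ‖u - v‖ := by
        rw [← Finset.sum_mul, sum_tent_zpow hdu hSu, Finset.sum_const, hcard, nsmul_eq_mul]
        ring

variable (hK : IsClosed K) (hKne : K.Nonempty)
include hK hKne

theorem dyadicBlend_mem (hKcv : Convex ℝ K) (x : X) : dyadicBlend K V x ∈ K := by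
  by_cases hx : x ∈ K
  · rwa [dyadicBlend_of_mem hx]
  have hd := (hK.notMem_iff_infDist_pos hKne).1 hx
  rw [dyadicBlend, if_neg hx]
  refine hKcv.sum_mem (fun m _ => tent_nonneg (by positivity) hd.le)
    (sum_tent_zpow hd subset_rfl) fun m hm => (hV m).mem x ?_
  linarith [zpow_bounds_of_mem_pair hd hm]

theorem norm_dyadicBlend_sub_le (x : X) : ‖dyadicBlend K V x - x‖ ≤ 8 * infDist x K := by
  by_cases hx : x ∈ K
  · rw [dyadicBlend_of_mem hx, sub_self, norm_zero]
    exact mul_nonneg (by norm_num) infDist_nonneg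
  have hd := (hK.notMem_iff_infDist_pos hKne).1 hx
  rw [dyadicBlend, if_neg hx]
  refine (norm_sum_smul_sub_le _ (fun m _ => tent_nonneg (by positivity) hd.le)
    (sum_tent_zpow hd subset_rfl) _ x).trans ?_
  calc ∑ m ∈ {Int.log 2 (infDist x K), Int.log 2 (infDist x K) + 1},
        tent (2 ^ m) (infDist x K) * ‖V m x - x‖
      ≤ ∑ m ∈ {Int.log 2 (infDist x K), Int.log 2 (infDist x K) + 1},
        tent (2 ^ m) (infDist x K) * (8 * infDist x K) := by
        refine Finset.sum_le_sum fun m hm => ?_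
        have hm' := zpow_bounds_of_mem_pair hd hm
        refine mul_le_mul_of_nonneg_left ?_ (tent_nonneg (by positivity) hd.le)
        linarith [(hV m).norm_sub_le x (by linarith)]
    _ = 8 * infDist x K := by rw [← Finset.sum_mul, sum_tent_zpow hd subset_rfl, one_mul]

theorem norm_dyadicBlend_sub_dyadicBlend_le {L₀ t : ℝ} (hL₀ : 0 ≤ L₀)
    (hL : ∀ m : ℤ, t / 2 < 2 ^ m → L m ≤ L₀) {x y : X} (hxy : ‖x - y‖ ≤ t) :
    ‖dyadicBlend K V x - dyadicBlend K V y‖ ≤ (L₀ + 329) * t := by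
  wlog hdist : infDist x K ≤ infDist y K generalizing x y
  · rw [norm_sub_rev]
    exact this (by rwa [norm_sub_rev]) (le_of_not_ge hdist)
  have hdy : infDist y K ≤ infDist x K + ‖x - y‖ := by
    simpa [dist_eq_norm, norm_sub_rev] using infDist_le_infDist_add_dist (x := y) (y := x) (s := K)
  have htri : ‖dyadicBlend K V x - dyadicBlend K V y‖
      ≤ 8 * infDist x K + ‖x - y‖ + 8 * infDist y K := by
    calc ‖dyadicBlend K V x - dyadicBlend K V y‖
        = ‖(dyadicBlend K V x - x) + (x - y) - (dyadicBlend K V y - y)‖ := by congr 1; abel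
      _ ≤ ‖dyadicBlend K V x - x‖ + ‖x - y‖ + ‖dyadicBlend K V y - y‖ :=
        (norm_sub_le _ _).trans (add_le_add (norm_add_le _ _) le_rfl)
      _ ≤ _ := by gcongr <;> exact norm_dyadicBlend_sub_le hV hK hKne _
  have hL₀t : 0 ≤ L₀ * t := mul_nonneg hL₀ ((norm_nonneg _).trans hxy)
  -- `329 = 16 · 20 + 9` comes from the case `infDist x K ≤ 20 * ‖x - y‖`
  by_cases h₁ : infDist x K ≤ t
  · linarith
  by_cases h₂ : infDist x K ≤ 20 * ‖x - y‖
  · linarith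
  rw [not_le] at h₁ h₂
  calc ‖dyadicBlend K V x - dyadicBlend K V y‖ ≤ (L₀ + 36) * ‖x - y‖ :=
        norm_dyadicBlend_sub_dyadicBlend_le_of_near hV hdist h₂ fun m hm => hL m (by linarith)
    _ ≤ (L₀ + 329) * t := by gcongr; linarith

end DyadicBlend

end Retraction

end

theorem statement1_general {X : Type*} [NormedAddCommGroup X] [NormedSpace ℝ X]
    (r : ℕ → ℝ)
    (hrnull : Filter.Tendsto r Filter.atTop (nhds 0))
    (K : Set X) (hKne : K.Nonempty) (hKcl : IsClosed K) (hKcv : Convex ℝ K)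
    (hflat : ∃ E : ℕ → Submodule ℝ X, ∀ n : ℕ, 1 ≤ n →
      Module.finrank ℝ (E n) = n ∧
      (K ∩ (E n : Set X)).Nonempty ∧ IsCompact (K ∩ (E n : Set X)) ∧
      ∀ x ∈ K, Metric.infDist x (K ∩ (E n : Set X)) ≤ r n) :
    ∃ R : X → X, (∀ x : X, R x ∈ K) ∧ (∀ x ∈ K, R x = x) ∧
      (∀ x : X, ‖R x - x‖ ≤ 9 * Metric.infDist x K) ∧
      ∀ t : ℝ, 0 < t → ∀ x y : X, ‖x - y‖ ≤ t →
        ‖R x - R y‖ ≤ 1520 * (20 : ℝ) ^ (sInf {n : ℕ | 1 ≤ n ∧ r n ≤ t / 20}) * t := by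
  obtain ⟨E, hE⟩ := hflat
  choose V hV using fun m : ℤ =>
    exists_isScaleRetraction_of_flat hKcv hrnull hE (zpow_pos two_pos m)
  refine ⟨dyadicBlend K V, dyadicBlend_mem hV hKcl hKne hKcv, fun x => dyadicBlend_of_mem,
    fun x => (norm_dyadicBlend_sub_le hV hKcl hKne x).trans ?_, fun t ht x y hxy => ?_⟩
  · linarith [infDist_nonneg (x := x) (s := K)]
  set M := sInf {n : ℕ | 1 ≤ n ∧ r n ≤ t / 20}
  have hM : 1 ≤ M ∧ r M ≤ t / 20 :=
    Nat.sInf_mem (nonempty_setOf_le_of_tendsto_zero hrnull (by positivity))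
  have hL (m : ℤ) (hm : t / 2 < 2 ^ m) :
      36 * (18 : ℝ) ^ sInf {n : ℕ | 1 ≤ n ∧ r n ≤ 2 ^ m / 5} ≤ 36 * 18 ^ M := by
    gcongr
    · norm_num
    · exact Nat.sInf_le ⟨hM.1, hM.2.trans (by linarith)⟩
  have h₁ : (18 : ℝ) ^ M ≤ 20 ^ M := pow_le_pow_left₀ (by norm_num) (by norm_num) M
  have h₂ : (1 : ℝ) ≤ 20 ^ M := one_le_pow₀ (by norm_num)
  calc ‖dyadicBlend K V x - dyadicBlend K V y‖ ≤ (36 * 18 ^ M + 329) * t :=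
        norm_dyadicBlend_sub_dyadicBlend_le hV hKcl hKne (by positivity) hL hxy
    _ ≤ 1520 * 20 ^ M * t := by gcongr; linarith

/-- Let `X` be an infinite-dimensional real normed space and `K ⊆ X`
a nonempty closed convex set that is `(rₙ)`-flat for a decreasing null sequence `(rₙ)` of
positive reals.  With `n(ε) = min {n : rₙ ≤ ε}`, there exists a retraction `R : X → K` with
`‖R x − x‖ ≤ 9 · dist(x, K)` for all `x`, and `‖R x − R y‖ ≤ 1520 · 20^(n(t/20)) · t`
whenever `t > 0` and `‖x − y‖ ≤ t`. -/
theorem statement1 {X : Type*} [NormedAddCommGroup X] [NormedSpace ℝ X]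
    (hinf : ¬ FiniteDimensional ℝ X)
    (r : ℕ → ℝ) (hrpos : ∀ n : ℕ, 1 ≤ n → 0 < r n)
    (hrdec : ∀ m n : ℕ, 1 ≤ m → m ≤ n → r n ≤ r m)
    (hrnull : Filter.Tendsto r Filter.atTop (nhds 0))
    (K : Set X) (hKne : K.Nonempty) (hKcl : IsClosed K) (hKcv : Convex ℝ K)
    (hflat : ∃ E : ℕ → Submodule ℝ X, ∀ n : ℕ, 1 ≤ n →
      Module.finrank ℝ (E n) = n ∧
      (K ∩ (E n : Set X)).Nonempty ∧ IsCompact (K ∩ (E n : Set X)) ∧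
      ∀ x ∈ K, Metric.infDist x (K ∩ (E n : Set X)) ≤ r n) :
    ∃ R : X → X, (∀ x : X, R x ∈ K) ∧ (∀ x ∈ K, R x = x) ∧
      (∀ x : X, ‖R x - x‖ ≤ 9 * Metric.infDist x K) ∧
      ∀ t : ℝ, 0 < t → ∀ x y : X, ‖x - y‖ ≤ t →
        ‖R x - R y‖ ≤ 1520 * (20 : ℝ) ^ (sInf {n : ℕ | 1 ≤ n ∧ r n ≤ t / 20}) * t :=
  statement1_general r hrnull K hKne hKcl hKcv hflat
end

section
/- Let X be a real Banach space with a semi-normalized subsymmetric Schauder basis, and assume X contains no subspace isomorphic to c₀. Then there exists a fixed-point-free map T : B_X → B_X that is Lipschitz and asymptotically regular. -/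
/-!
Write `S` for the right shift of the basis, `‖y‖∞` for the supremum of the coefficients of `y`
and `ρ` for the radial retraction onto the unit ball. The map is `T = ρ ∘ W` with
`W y = h y • x₀ + S y`, `h y = ‖y‖∞ + max 0 (r - ‖y‖)` and `r = (C (1 + C))⁻¹`.

A fixed point `y = m⁻¹ • W y` (with `m ≥ 1`) has coefficients `h y * m⁻¹ ^ (k + 1)`. If `m = 1`
they are constant, contradicting the unboundedness of `‖∑ n < N, xₙ‖`: were it bounded,
`u ↦ ∑ uₙ xₙ` would embed `c₀`. If `m > 1` then `‖y‖ = 1`, the bump vanishes, and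
`h y = ‖y‖∞ = h y / m`.

For asymptotic regularity undo the retractions: if `Pₙ` is the product of the first `n` retraction
factors, then `zₙ = Pₙ • Tⁿ y` evolves linearly, `zₙ₊₁ = hₙ • x₀ + S zₙ`, with nondecreasing
heads `hₙ ≥ h y > 0`. By unconditionality `Pₙ ≥ ‖zₙ‖ ≥ h y ‖∑ k < n, xₖ‖ / C²`, so `Pₙ → ∞`.
Subsymmetry gives `‖zₖ‖ ≤ C (1 + C) ‖zₙ‖` for `k ≤ n`, hence `Pₙ ≤ max 1 (‖zₙ‖ / r)`: once
`Pₙ > 1` the orbit stays outside the bump, the heads are eventually constant, and `zₙ₊₁ - zₙ` is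
eventually a shift of a fixed vector. So `‖Tⁿ⁺¹ y - Tⁿ y‖ ≤ 2 ‖zₙ₊₁ - zₙ‖ / Pₙ → 0`.
-/

open Filter Finset Topology
open scoped ZeroAtInfty

section Unconditional

variable {X : Type*} [NormedAddCommGroup X] [NormedSpace ℝ X]

def IsUnconditional (x : ℕ → X) (C : ℝ) : Prop :=
  ∀ (s : Finset ℕ) (a ε : ℕ → ℝ), (∀ n, ε n = 1 ∨ ε n = -1) →
    ‖∑ n ∈ s, (ε n * a n) • x n‖ ≤ C * ‖∑ n ∈ s, a n • x n‖

lemma IsUnconditional.mono {x : ℕ → X} {C C' : ℝ} (hx : IsUnconditional x C) (hC : C ≤ C') :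
    IsUnconditional x C' := fun s a ε hε =>
  (hx s a ε hε).trans (mul_le_mul_of_nonneg_right hC (norm_nonneg _))

/-- `t ↦ ‖w + t • v‖` is convex, so on `[-|b|, |b|]` it is maximal at an endpoint. -/
lemma exists_sign_norm_add_smul_le (w v : X) {c b : ℝ} (h : |c| ≤ |b|) :
    ∃ σ : ℝ, (σ = 1 ∨ σ = -1) ∧ ‖w + c • v‖ ≤ ‖w + (σ * b) • v‖ := by
  have hconv : ConvexOn ℝ Set.univ fun t : ℝ => ‖w + t • v‖ :=
    ((convexOn_norm convex_univ).translate_right w).comp_linearMap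
      (LinearMap.toSpanSingleton ℝ X v)
  have hc : c ∈ segment ℝ b (-b) := by
    rw [segment_eq_Icc', Set.mem_Icc, min_le_iff, le_max_iff]
    rcases abs_le.1 h with ⟨h1, h2⟩
    rcases abs_cases b with ⟨hb, -⟩ | ⟨hb, -⟩ <;> rw [hb] at h1 h2
    exacts [⟨.inr h1, .inl h2⟩, ⟨.inl (by linarith), .inr h2⟩]
  rcases le_max_iff.1 (hconv.le_on_segment trivial trivial hc) with h1 | h1
  · exact ⟨1, .inl rfl, by simpa using h1⟩
  · exact ⟨-1, .inr rfl, by simpa using h1⟩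

lemma exists_signs_norm_add_sum_le (x : ℕ → X) (s : Finset ℕ) (w : X) {c b : ℕ → ℝ}
    (h : ∀ n ∈ s, |c n| ≤ |b n|) :
    ∃ ε : ℕ → ℝ, (∀ n, ε n = 1 ∨ ε n = -1) ∧
      ‖w + ∑ n ∈ s, c n • x n‖ ≤ ‖w + ∑ n ∈ s, (ε n * b n) • x n‖ := by
  classical
  induction s using Finset.induction_on generalizing w with
  | empty => exact ⟨fun _ => 1, fun _ => .inl rfl, le_rfl⟩
  | insert a s ha ih =>
    obtain ⟨ε, hε, hle⟩ := ih (w + c a • x a) fun n hn => h n (mem_insert_of_mem hn)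
    obtain ⟨σ, hσ, hσle⟩ := exists_sign_norm_add_smul_le (w + ∑ n ∈ s, (ε n * b n) • x n)
      (x a) (h a (mem_insert_self a s))
    refine ⟨Function.update ε a σ, fun n => ?_, ?_⟩
    · rcases eq_or_ne n a with rfl | hn
      · simpa using hσ
      · simpa [hn] using hε n
    have hs : ∑ n ∈ s, (Function.update ε a σ n * b n) • x n
        = ∑ n ∈ s, (ε n * b n) • x n :=
      sum_congr rfl fun n hn => by rw [Function.update_of_ne (ne_of_mem_of_not_mem hn ha)]
    calc ‖w + ∑ n ∈ insert a s, c n • x n‖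
        = ‖(w + c a • x a) + ∑ n ∈ s, c n • x n‖ := by rw [sum_insert ha, add_assoc]
      _ ≤ ‖(w + c a • x a) + ∑ n ∈ s, (ε n * b n) • x n‖ := hle
      _ = ‖(w + ∑ n ∈ s, (ε n * b n) • x n) + c a • x a‖ := by rw [add_right_comm]
      _ ≤ ‖(w + ∑ n ∈ s, (ε n * b n) • x n) + (σ * b a) • x a‖ := hσle
      _ = ‖w + ∑ n ∈ insert a s, (Function.update ε a σ n * b n) • x n‖ := by
        rw [sum_insert ha, hs, Function.update_self]; abel_nf

lemma IsUnconditional.norm_sum_le_of_abs_le {x : ℕ → X} {C : ℝ} (hx : IsUnconditional x C)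
    (s : Finset ℕ) {c b : ℕ → ℝ} (h : ∀ n ∈ s, |c n| ≤ |b n|) :
    ‖∑ n ∈ s, c n • x n‖ ≤ C * ‖∑ n ∈ s, b n • x n‖ := by
  obtain ⟨ε, hε, hle⟩ := exists_signs_norm_add_sum_le x s 0 h
  rw [zero_add, zero_add] at hle
  exact hle.trans (hx s b ε hε)

lemma IsUnconditional.norm_sum_le_of_subset {x : ℕ → X} {C : ℝ} (hx : IsUnconditional x C)
    {s t : Finset ℕ} (hst : s ⊆ t) (a : ℕ → ℝ) :
    ‖∑ n ∈ s, a n • x n‖ ≤ C * ‖∑ n ∈ t, a n • x n‖ := by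
  classical
  have hs : ∑ n ∈ s, a n • x n = ∑ n ∈ t, (if n ∈ s then a n else 0) • x n := by
    simp [ite_smul, sum_ite_mem, inter_eq_right.2 hst]
  rw [hs]
  refine hx.norm_sum_le_of_abs_le t fun n _ => ?_
  split_ifs <;> simp

end Unconditional

section BoundedFundamentalFunction

variable {X : Type*} [NormedAddCommGroup X] [NormedSpace ℝ X] {x : ℕ → X} {C M : ℝ}

lemma IsUnconditional.norm_sum_le_of_abs_le_const (hx : IsUnconditional x C) (hC : 0 ≤ C)
    (hM : ∀ N, ‖∑ n ∈ range N, x n‖ ≤ M) (s : Finset ℕ) {u : ℕ → ℝ} {t : ℝ} (ht : 0 ≤ t)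
    (hu : ∀ n ∈ s, |u n| ≤ t) :
    ‖∑ n ∈ s, u n • x n‖ ≤ C * (C * M) * t := by
  obtain ⟨N, hsN⟩ := s.exists_nat_subset_range
  calc ‖∑ n ∈ s, u n • x n‖
      ≤ C * ‖∑ n ∈ s, t • x n‖ :=
        hx.norm_sum_le_of_abs_le s (b := fun _ => t) fun n hn => (hu n hn).trans (le_abs_self t)
    _ ≤ C * (C * ‖∑ n ∈ range N, t • x n‖) :=
        mul_le_mul_of_nonneg_left (hx.norm_sum_le_of_subset hsN _) hC
    _ = C * C * t * ‖∑ n ∈ range N, x n‖ := by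
        rw [← smul_sum, norm_smul, Real.norm_of_nonneg ht]; ring
    _ ≤ C * C * t * M := by gcongr; exact hM N
    _ = C * (C * M) * t := by ring

lemma IsUnconditional.summable_smul_of_tendsto_zero [CompleteSpace X] (hx : IsUnconditional x C)
    (hC : 0 ≤ C) (hM : ∀ N, ‖∑ n ∈ range N, x n‖ ≤ M) {u : ℕ → ℝ}
    (hu : Tendsto u atTop (𝓝 0)) :
    Summable fun n => u n • x n := by
  have hM0 : 0 ≤ M := by simpa using hM 0
  set K := C * (C * M)
  rw [summable_iff_vanishing_norm]
  intro ε hε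
  obtain ⟨N, hN⟩ := Metric.tendsto_atTop.1 hu (ε / (K + 1)) (by positivity)
  refine ⟨range N, fun t ht => ?_⟩
  have hut : ∀ n ∈ t, |u n| ≤ ε / (K + 1) := fun n hn => by
    have hn : N ≤ n := by simpa using disjoint_left.1 ht hn
    simpa using (hN n hn).le
  calc ‖∑ n ∈ t, u n • x n‖ ≤ K * (ε / (K + 1)) :=
        hx.norm_sum_le_of_abs_le_const hC hM t (by positivity) hut
    _ < ε := by rw [← mul_div_assoc, div_lt_iff₀ (by positivity)]; nlinarith

end BoundedFundamentalFunction

lemma cauchySeq_sum_range_of_norm_sum_Ico_le {E : Type*} [SeminormedAddCommGroup E]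
    {f g : ℕ → E} {c : ℝ} (hc : 0 ≤ c)
    (h : ∀ m n, ‖∑ k ∈ Ico m n, f k‖ ≤ c * ‖∑ k ∈ Ico m n, g k‖)
    (hg : CauchySeq fun N => ∑ k ∈ range N, g k) :
    CauchySeq fun N => ∑ k ∈ range N, f k := by
  rw [Metric.cauchySeq_iff'] at hg ⊢
  intro ε hε
  obtain ⟨N, hN⟩ := hg (ε / (c + 1)) (by positivity)
  refine ⟨N, fun n hn => ?_⟩
  have hgn := hN n hn
  rw [dist_eq_norm, ← sum_Ico_eq_sub _ hn] at hgn ⊢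
  calc ‖∑ k ∈ Ico N n, f k‖ ≤ c * ‖∑ k ∈ Ico N n, g k‖ := h N n
    _ ≤ c * (ε / (c + 1)) := by gcongr
    _ < ε := by rw [← mul_div_assoc, div_lt_iff₀ (by positivity)]; linarith

section RadialRetraction

variable {E : Type*} [SeminormedAddCommGroup E] [NormedSpace ℝ E]

noncomputable def radialRetraction (z : E) : E := (max 1 ‖z‖)⁻¹ • z

lemma norm_radialRetraction_le (z : E) : ‖radialRetraction z‖ ≤ 1 := by
  rw [radialRetraction, norm_smul, Real.norm_of_nonneg (by positivity),
    inv_mul_le_one₀ (by positivity)]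
  exact le_max_right _ _

lemma lipschitzWith_radialRetraction : LipschitzWith 2 (radialRetraction : E → E) := by
  refine LipschitzWith.of_dist_le_mul fun a c => ?_
  have hαγ : |max 1 ‖c‖ - max 1 ‖a‖| ≤ ‖a - c‖ := by
    rw [abs_sub_comm, max_comm 1 ‖a‖, max_comm 1 ‖c‖]
    exact (abs_max_sub_max_le_abs _ _ 1).trans (abs_norm_sub_norm_le a c)
  set α := max 1 ‖a‖
  set γ := max 1 ‖c‖
  have hα : 1 ≤ α := le_max_left _ _
  have hγ : 1 ≤ γ := le_max_left _ _
  have hc : ‖c‖ ≤ γ := le_max_right _ _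
  have hsplit : radialRetraction a - radialRetraction c
      = α⁻¹ • (a - c) + ((γ - α) / (α * γ)) • c := by
    rw [radialRetraction, radialRetraction,
      show (γ - α) / (α * γ) = α⁻¹ - γ⁻¹ by field_simp]
    module
  rw [dist_eq_norm, dist_eq_norm, hsplit, NNReal.coe_ofNat]
  calc ‖α⁻¹ • (a - c) + ((γ - α) / (α * γ)) • c‖
      ≤ α⁻¹ * ‖a - c‖ + |γ - α| / α * (‖c‖ / γ) := by
        refine (norm_add_le _ _).trans_eq ?_
        rw [norm_smul, norm_smul, Real.norm_of_nonneg (by positivity), Real.norm_eq_abs,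
          abs_div, abs_of_pos (by positivity : 0 < α * γ)]
        ring
    _ ≤ 1 * ‖a - c‖ + ‖a - c‖ / 1 * 1 := by
        gcongr
        exacts [inv_le_one_of_one_le₀ hα, (div_le_one (by positivity)).2 hc]
    _ = 2 * ‖a - c‖ := by ring

end RadialRetraction

lemma norm_inv_smul_sub_inv_smul_le {E : Type*} [SeminormedAddCommGroup E] [NormedSpace ℝ E]
    {z z' : E} {P P' : ℝ} (hP : 0 < P) (hPP' : P ≤ P') (hz : ‖z‖ ≤ P)
    (hP' : P' ≤ P + ‖z' - z‖) :
    ‖P'⁻¹ • z' - P⁻¹ • z‖ ≤ 2 * ‖z' - z‖ / P := by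
  have hP'0 : 0 < P' := hP.trans_le hPP'
  have hsplit : P'⁻¹ • z' - P⁻¹ • z = P'⁻¹ • (z' - z) - ((P' - P) / (P * P')) • z := by
    rw [show (P' - P) / (P * P') = P⁻¹ - P'⁻¹ by field_simp]
    module
  rw [hsplit]
  calc ‖P'⁻¹ • (z' - z) - ((P' - P) / (P * P')) • z‖
      ≤ P'⁻¹ * ‖z' - z‖ + (P' - P) / (P * P') * ‖z‖ := by
        refine (norm_sub_le _ _).trans_eq ?_
        rw [norm_smul, norm_smul, Real.norm_of_nonneg (by positivity),
          Real.norm_of_nonneg (div_nonneg (by linarith) (by positivity))]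
    _ ≤ P⁻¹ * ‖z' - z‖ + P⁻¹ * ‖z' - z‖ := by
        refine add_le_add (by gcongr) ?_
        calc (P' - P) / (P * P') * ‖z‖ ≤ ‖z' - z‖ / (P * P') * P := by
              gcongr
              linarith
          _ = P'⁻¹ * ‖z' - z‖ := by field_simp
          _ ≤ P⁻¹ * ‖z' - z‖ := by gcongr
    _ = 2 * ‖z' - z‖ / P := by ring

/-- A Schauder basis bounded below by `A > 0`. Subsymmetry is recorded only for the shifts
`n ↦ n + j`, with one constant `C` for it and for unconditionality. -/
structure SubsymmetricBasis (X : Type*) [NormedAddCommGroup X] [NormedSpace ℝ X]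
    [CompleteSpace X] where
  x : ℕ → X
  coeff : X → ℕ → ℝ
  tendsto_sum_coeff (y : X) : Tendsto (fun N => ∑ n ∈ range N, coeff y n • x n) atTop (𝓝 y)
  coeff_eq_of_tendsto (y : X) (a : ℕ → ℝ) :
    Tendsto (fun N => ∑ n ∈ range N, a n • x n) atTop (𝓝 y) → coeff y = a
  C : ℝ
  one_le_C : 1 ≤ C
  isUnconditional : IsUnconditional x C
  norm_sum_shift_le (j : ℕ) (s : Finset ℕ) (a : ℕ → ℝ) :
    ‖∑ n ∈ s, a n • x (n + j)‖ ≤ C * ‖∑ n ∈ s, a n • x n‖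
  norm_sum_le_shift (j : ℕ) (s : Finset ℕ) (a : ℕ → ℝ) :
    ‖∑ n ∈ s, a n • x n‖ ≤ C * ‖∑ n ∈ s, a n • x (n + j)‖
  A : ℝ
  A_pos : 0 < A
  A_le_norm (n : ℕ) : A ≤ ‖x n‖

namespace SubsymmetricBasis

variable {X : Type*} [NormedAddCommGroup X] [NormedSpace ℝ X] [CompleteSpace X]
  (b : SubsymmetricBasis X)

lemma C_pos : 0 < b.C := one_pos.trans_le b.one_le_C

def partialSum (y : X) (N : ℕ) : X := ∑ n ∈ range N, b.coeff y n • b.x n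

lemma norm_partialSum_le (y : X) (N : ℕ) : ‖b.partialSum y N‖ ≤ b.C * ‖y‖ := by
  refine ge_of_tendsto ((b.tendsto_sum_coeff y).norm.const_mul b.C) ?_
  filter_upwards [eventually_ge_atTop N] with M hM
  exact b.isUnconditional.norm_sum_le_of_subset (range_subset_range.2 hM) _

lemma abs_coeff_le (y : X) (n : ℕ) : |b.coeff y n| ≤ 2 * b.C / b.A * ‖y‖ := by
  have hterm : ‖b.coeff y n • b.x n‖ ≤ 2 * b.C * ‖y‖ := by
    rw [show b.coeff y n • b.x n = b.partialSum y (n + 1) - b.partialSum y n by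
      simp [partialSum, sum_range_succ]]
    linarith [norm_sub_le (b.partialSum y (n + 1)) (b.partialSum y n),
      b.norm_partialSum_le y (n + 1), b.norm_partialSum_le y n]
  rw [norm_smul, Real.norm_eq_abs] at hterm
  rw [div_mul_eq_mul_div, le_div_iff₀ b.A_pos]
  exact (mul_le_mul_of_nonneg_left (b.A_le_norm n) (abs_nonneg _)).trans hterm

lemma coeff_injective : Function.Injective b.coeff := fun y z h =>
  tendsto_nhds_unique (b.tendsto_sum_coeff y) (h ▸ b.tendsto_sum_coeff z)

lemma coeff_sum_range {a : ℕ → ℝ} {N : ℕ} (ha : ∀ n, N ≤ n → a n = 0) :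
    b.coeff (∑ n ∈ range N, a n • b.x n) = a := by
  refine b.coeff_eq_of_tendsto _ _ (tendsto_atTop_of_eventually_const (i₀ := N) fun M hM => ?_)
  refine (sum_subset (range_subset_range.2 hM) fun n _ hn => ?_).symm
  rw [ha n (by simpa using hn), zero_smul]

lemma coeff_zero : b.coeff 0 = 0 := by
  simpa using b.coeff_sum_range (a := 0) (N := 0) fun _ _ => rfl

lemma coeff_smul_x_zero (a : ℝ) : b.coeff (a • b.x 0) = fun m => if m = 0 then a else 0 := by
  simpa using b.coeff_sum_range (a := fun m => if m = 0 then a else 0) (N := 1)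
    fun n hn => if_neg (by omega)

lemma coeff_partialSum (y : X) (N : ℕ) :
    b.coeff (b.partialSum y N) = fun m => if m < N then b.coeff y m else 0 := by
  rw [← b.coeff_sum_range (a := fun m => if m < N then b.coeff y m else 0) (N := N)
    fun n hn => if_neg (by omega)]
  exact congrArg b.coeff (sum_congr rfl fun n hn => by rw [if_pos (mem_range.1 hn)])

lemma coeff_add (y z : X) : b.coeff (y + z) = b.coeff y + b.coeff z :=
  b.coeff_eq_of_tendsto _ _ <| by
    simpa [add_smul, sum_add_distrib] using (b.tendsto_sum_coeff y).add (b.tendsto_sum_coeff z)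

lemma coeff_sub (y z : X) : b.coeff (y - z) = b.coeff y - b.coeff z :=
  b.coeff_eq_of_tendsto _ _ <| by
    simpa [sub_smul, sum_sub_distrib] using (b.tendsto_sum_coeff y).sub (b.tendsto_sum_coeff z)

lemma coeff_smul (c : ℝ) (y : X) : b.coeff (c • y) = c • b.coeff y :=
  b.coeff_eq_of_tendsto _ _ <| by
    simpa [smul_sum, smul_smul] using (b.tendsto_sum_coeff y).const_smul c

noncomputable def supCoeff (y : X) : ℝ := ⨆ n, |b.coeff y n|

lemma abs_coeff_le_supCoeff (y : X) (n : ℕ) : |b.coeff y n| ≤ b.supCoeff y :=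
  le_ciSup ⟨_, Set.forall_mem_range.2 (b.abs_coeff_le y)⟩ n

lemma supCoeff_nonneg (y : X) : 0 ≤ b.supCoeff y :=
  (abs_nonneg _).trans (b.abs_coeff_le_supCoeff y 0)

lemma supCoeff_pos {y : X} (hy : y ≠ 0) : 0 < b.supCoeff y := by
  refine (b.supCoeff_nonneg y).lt_of_ne fun h => hy (b.coeff_injective ?_)
  funext n
  simpa [coeff_zero, ← h] using b.abs_coeff_le_supCoeff y n

lemma supCoeff_le_add (y z : X) :
    b.supCoeff y ≤ b.supCoeff z + 2 * b.C / b.A * ‖y - z‖ :=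
  ciSup_le fun n => by
    rw [show b.coeff y n = b.coeff z n + b.coeff (y - z) n by simp [coeff_sub]]
    exact (abs_add_le _ _).trans
      (add_le_add (b.abs_coeff_le_supCoeff z n) (b.abs_coeff_le (y - z) n))

lemma lipschitzWith_supCoeff : LipschitzWith (2 * b.C / b.A).toNNReal b.supCoeff :=
  LipschitzWith.of_le_add_mul' _ fun y z => by rw [dist_eq_norm]; exact b.supCoeff_le_add y z

lemma supCoeff_smul {c : ℝ} (hc : 0 ≤ c) (y : X) : b.supCoeff (c • y) = c * b.supCoeff y := by
  simp only [supCoeff, coeff_smul, Pi.smul_apply, smul_eq_mul, abs_mul, abs_of_nonneg hc]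
  exact (Real.mul_iSup_of_nonneg hc _).symm

noncomputable def bumpRadius : ℝ := (b.C * (1 + b.C))⁻¹

lemma bumpRadius_pos : 0 < b.bumpRadius := by
  have := b.C_pos; unfold bumpRadius; positivity

lemma bumpRadius_le_one : b.bumpRadius ≤ 1 :=
  inv_le_one_of_one_le₀ (by nlinarith [b.one_le_C])

noncomputable def head (y : X) : ℝ := b.supCoeff y + max 0 (b.bumpRadius - ‖y‖)

lemma supCoeff_le_head (y : X) : b.supCoeff y ≤ b.head y :=
  le_add_of_nonneg_right (le_max_left _ _)

lemma head_eq_supCoeff {y : X} (hy : b.bumpRadius ≤ ‖y‖) : b.head y = b.supCoeff y := by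
  rw [head, max_eq_left (by linarith), add_zero]

lemma head_pos (y : X) : 0 < b.head y := by
  rcases lt_or_ge ‖y‖ b.bumpRadius with hy | hy
  · exact add_pos_of_nonneg_of_pos (b.supCoeff_nonneg y) (lt_max_of_lt_right (by linarith))
  · rw [b.head_eq_supCoeff hy]
    exact b.supCoeff_pos (norm_pos_iff.1 (b.bumpRadius_pos.trans_le hy))

lemma exists_c0_embedding {M : ℝ} (hM : ∀ N, ‖∑ n ∈ range N, b.x n‖ ≤ M) :
    ∃ (f : C₀(ℕ, ℝ) →L[ℝ] X) (c : ℝ), 0 < c ∧ ∀ u : C₀(ℕ, ℝ), c * ‖u‖ ≤ ‖f u‖ := by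
  have hsum (u : C₀(ℕ, ℝ)) : Summable fun n => u n • b.x n := by
    refine b.isUnconditional.summable_smul_of_tendsto_zero b.C_pos.le hM ?_
    simpa [cocompact_eq_cofinite, Nat.cofinite_eq_atTop] using
      ZeroAtInftyContinuousMapClass.zero_at_infty u
  have habs (u : C₀(ℕ, ℝ)) (n : ℕ) : |u n| ≤ ‖u‖ := by
    simpa [ZeroAtInftyContinuousMap.norm_toBCF_eq_norm] using
      BoundedContinuousFunction.norm_coe_le_norm u.toBCF n
  let f : C₀(ℕ, ℝ) →ₗ[ℝ] X :=
    { toFun u := ∑' n, u n • b.x n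
      map_add' u v := by simp [add_smul, (hsum u).tsum_add (hsum v)]
      map_smul' c u := by simp [← smul_smul, (hsum u).tsum_const_smul c] }
  have hcoeff (u : C₀(ℕ, ℝ)) : b.coeff (f u) = u :=
    b.coeff_eq_of_tendsto _ _ (hsum u).hasSum.tendsto_sum_nat
  have hK : 0 < 2 * b.C / b.A := by have := b.C_pos; have := b.A_pos; positivity
  refine ⟨f.mkContinuous (b.C * (b.C * M)) fun u => ?_, (2 * b.C / b.A)⁻¹, inv_pos.2 hK,
    fun u => ?_⟩
  · refine le_of_tendsto (hsum u).hasSum.tendsto_sum_nat.norm (Eventually.of_forall fun N => ?_)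
    exact b.isUnconditional.norm_sum_le_of_abs_le_const b.C_pos.le hM _ (norm_nonneg u)
      fun n _ => habs u n
  · rw [inv_mul_le_iff₀ hK, ← ZeroAtInftyContinuousMap.norm_toBCF_eq_norm,
      BoundedContinuousFunction.norm_le (by positivity)]
    intro n
    simpa [hcoeff] using b.abs_coeff_le (f u) n

lemma not_bddAbove_norm_sum_range
    (h : ¬ ∃ (f : C₀(ℕ, ℝ) →L[ℝ] X) (c : ℝ), 0 < c ∧ ∀ u : C₀(ℕ, ℝ), c * ‖u‖ ≤ ‖f u‖) :
    ¬ BddAbove (Set.range fun N => ‖∑ n ∈ range N, b.x n‖) := fun ⟨_, hM⟩ =>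
  h (b.exists_c0_embedding fun N => hM ⟨N, rfl⟩)

noncomputable def shift (j : ℕ) (y : X) : X :=
  limUnder atTop fun N => ∑ n ∈ range N, b.coeff y n • b.x (n + j)

lemma tendsto_sum_shift (j : ℕ) (y : X) :
    Tendsto (fun N => ∑ n ∈ range N, b.coeff y n • b.x (n + j)) atTop (𝓝 (b.shift j y)) :=
  CauchySeq.tendsto_limUnder <|
    cauchySeq_sum_range_of_norm_sum_Ico_le b.C_pos.le (fun _ _ => b.norm_sum_shift_le j _ _)
      (b.tendsto_sum_coeff y).cauchySeq

lemma coeff_shift (j : ℕ) (y : X) :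
    b.coeff (b.shift j y) = fun m => if m < j then 0 else b.coeff y (m - j) := by
  refine b.coeff_eq_of_tendsto _ _ ((tendsto_add_atTop_iff_nat j).1 ?_)
  refine (b.tendsto_sum_shift j y).congr fun N => ?_
  rw [add_comm N j, sum_range_add,
    sum_eq_zero (s := range j) fun m hm => by simp [mem_range.1 hm], zero_add]
  simp [add_comm]

lemma norm_shift_le (j : ℕ) (y : X) : ‖b.shift j y‖ ≤ b.C * ‖y‖ :=
  le_of_tendsto_of_tendsto' (b.tendsto_sum_shift j y).norm
    ((b.tendsto_sum_coeff y).norm.const_mul b.C) fun _ => b.norm_sum_shift_le j _ _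

lemma norm_le_shift (j : ℕ) (y : X) : ‖y‖ ≤ b.C * ‖b.shift j y‖ :=
  le_of_tendsto_of_tendsto' (b.tendsto_sum_coeff y).norm
    ((b.tendsto_sum_shift j y).norm.const_mul b.C) fun _ => b.norm_sum_le_shift j _ _

lemma shift_zero (y : X) : b.shift 0 y = y :=
  b.coeff_injective <| by simp [coeff_shift]

lemma shift_one_shift (j : ℕ) (y : X) : b.shift 1 (b.shift j y) = b.shift (j + 1) y :=
  b.coeff_injective <| by
    funext m
    simp only [coeff_shift]
    split_ifs <;> first | rfl | omega | (congr 1; omega)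

lemma shift_sub (j : ℕ) (y z : X) : b.shift j (y - z) = b.shift j y - b.shift j z :=
  b.coeff_injective <| by
    funext m
    simp only [coeff_shift, coeff_sub, Pi.sub_apply]
    split_ifs <;> simp

lemma shift_smul (j : ℕ) (c : ℝ) (y : X) : b.shift j (c • y) = c • b.shift j y :=
  b.coeff_injective <| by
    funext m
    simp only [coeff_shift, coeff_smul, Pi.smul_apply]
    split_ifs <;> simp

noncomputable def cons (a : ℝ) (v : X) : X := a • b.x 0 + b.shift 1 v

lemma coeff_cons (a : ℝ) (v : X) :
    b.coeff (b.cons a v) = fun m => if m = 0 then a else b.coeff v (m - 1) := by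
  funext m
  simp only [cons, coeff_add, coeff_smul_x_zero, coeff_shift, Pi.add_apply]
  split_ifs <;> first | omega | simp

lemma supCoeff_cons (a : ℝ) (v : X) : b.supCoeff (b.cons a v) = max |a| (b.supCoeff v) := by
  refine le_antisymm (ciSup_le fun m => ?_) (max_le ?_ (ciSup_le fun m => ?_))
  · simp only [coeff_cons]
    split_ifs
    exacts [le_max_left _ _, (b.abs_coeff_le_supCoeff v _).trans (le_max_right _ _)]
  · simpa [coeff_cons] using b.abs_coeff_le_supCoeff (b.cons a v) 0
  · simpa [coeff_cons] using b.abs_coeff_le_supCoeff (b.cons a v) (m + 1)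

noncomputable def T (y : X) : X := radialRetraction (b.cons (b.head y) y)

lemma T_eq (y : X) :
    b.T y = (max 1 ‖b.cons (b.head y) y‖)⁻¹ • b.cons (b.head y) y := rfl

lemma lipschitzWith_shift (j : ℕ) : LipschitzWith b.C.toNNReal (b.shift j) :=
  LipschitzWith.of_dist_le_mul fun y z => by
    rw [dist_eq_norm, dist_eq_norm, ← shift_sub, Real.coe_toNNReal _ b.C_pos.le]
    exact b.norm_shift_le j (y - z)

lemma exists_lipschitzWith_T : ∃ K, LipschitzWith K b.T := by
  have hhead : LipschitzWith _ b.head := b.lipschitzWith_supCoeff.add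
    (((LipschitzWith.const b.bumpRadius).sub lipschitzWith_one_norm).const_max 0)
  exact ⟨_, lipschitzWith_radialRetraction.comp
    (((ContinuousLinearMap.toSpanSingleton ℝ (b.x 0)).lipschitz.comp hhead).add
      (b.lipschitzWith_shift 1))⟩

theorem T_ne_self (hunb : ¬ BddAbove (Set.range fun N => ‖∑ n ∈ range N, b.x n‖)) (y : X) :
    b.T y ≠ y := by
  intro hy
  set w := b.cons (b.head y) y
  set m := max 1 ‖w‖
  have hm : 1 ≤ m := le_max_left _ _
  have hh := b.head_pos y
  have hrec (k : ℕ) :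
      b.coeff y k = m⁻¹ * if k = 0 then b.head y else b.coeff y (k - 1) := by
    have hyw : b.coeff y = m⁻¹ • b.coeff w := by rw [← coeff_smul, ← T_eq, hy]
    simpa [w, coeff_cons] using congrFun hyw k
  have hcoeff (k : ℕ) : b.coeff y k = b.head y * m⁻¹ ^ (k + 1) := by
    induction k with
    | zero => rw [hrec, if_pos rfl]; ring
    | succ k ih => rw [hrec, if_neg k.succ_ne_zero, Nat.add_sub_cancel, ih]; ring
  rcases hm.eq_or_lt with hm1 | hm1
  · refine hunb ⟨b.C * ‖y‖ / b.head y, Set.forall_mem_range.2 fun N => ?_⟩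
    have hN := b.norm_partialSum_le y N
    rw [partialSum, sum_congr rfl fun n _ => by rw [hcoeff, ← hm1, inv_one, one_pow, mul_one],
      ← smul_sum, norm_smul, Real.norm_of_nonneg hh.le] at hN
    rwa [le_div_iff₀ hh, mul_comm]
  · have hwm : ‖w‖ = m := (max_eq_right (le_of_lt (by simpa [m] using hm1))).symm
    have hy1 : ‖y‖ = 1 := by
      rw [← hy]
      change ‖m⁻¹ • w‖ = 1
      rw [norm_smul, Real.norm_of_nonneg (by positivity), hwm, inv_mul_cancel₀ (by positivity)]
    have hsup : b.supCoeff y ≤ b.head y * m⁻¹ := ciSup_le fun k => by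
      rw [hcoeff k, abs_of_nonneg (by positivity)]
      gcongr
      exact pow_le_of_le_one (by positivity) (inv_le_one_of_one_le₀ hm) k.succ_ne_zero
    rw [← b.head_eq_supCoeff (hy1 ▸ b.bumpRadius_le_one)] at hsup
    linarith [mul_lt_of_lt_one_right hh (inv_lt_one_of_one_lt₀ hm1)]

section Orbit

-- `scale y n`, `lifted y n` and `liftedHead y n` are the `Pₙ`, `zₙ` and `hₙ` of the header.
variable (y : X)

noncomputable def scale (n : ℕ) : ℝ :=
  ∏ k ∈ range n, max 1 ‖b.cons (b.head (b.T^[k] y)) (b.T^[k] y)‖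

noncomputable def lifted (n : ℕ) : X := b.scale y n • b.T^[n] y

noncomputable def liftedHead (n : ℕ) : ℝ := b.scale y n * b.head (b.T^[n] y)

lemma scale_zero : b.scale y 0 = 1 := prod_range_zero _

lemma scale_succ (n : ℕ) :
    b.scale y (n + 1) = b.scale y n * max 1 ‖b.cons (b.head (b.T^[n] y)) (b.T^[n] y)‖ :=
  prod_range_succ _ n

lemma one_le_scale (n : ℕ) : 1 ≤ b.scale y n := by
  induction n with
  | zero => rw [scale_zero]
  | succ n ih => rw [scale_succ]; exact one_le_mul_of_one_le_of_one_le ih (le_max_left _ _)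

lemma scale_pos (n : ℕ) : 0 < b.scale y n := one_pos.trans_le (b.one_le_scale y n)

lemma iterate_eq_inv_smul_lifted (n : ℕ) : b.T^[n] y = (b.scale y n)⁻¹ • b.lifted y n := by
  rw [lifted, inv_smul_smul₀ (b.scale_pos y n).ne']

lemma lifted_succ_eq_smul (n : ℕ) :
    b.lifted y (n + 1) = b.scale y n • b.cons (b.head (b.T^[n] y)) (b.T^[n] y) := by
  rw [lifted, scale_succ, Function.iterate_succ_apply', T_eq, smul_smul, mul_assoc,
    mul_inv_cancel₀ (by positivity), mul_one]

lemma lifted_succ (n : ℕ) :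
    b.lifted y (n + 1) = b.cons (b.liftedHead y n) (b.lifted y n) := by
  rw [lifted_succ_eq_smul, cons, cons, smul_add, smul_smul, ← shift_smul]
  rfl

lemma scale_succ_eq_max (n : ℕ) :
    b.scale y (n + 1) = max (b.scale y n) ‖b.lifted y (n + 1)‖ := by
  rw [scale_succ, lifted_succ_eq_smul, norm_smul, Real.norm_of_nonneg (b.scale_pos y n).le,
    mul_max_of_nonneg _ _ (b.scale_pos y n).le, mul_one]

lemma monotone_scale : Monotone (b.scale y) :=
  monotone_nat_of_le_succ fun n => (b.scale_succ_eq_max y n).ge.trans' (le_max_left _ _)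

lemma norm_lifted_le_scale (hy : ‖y‖ ≤ 1) (n : ℕ) : ‖b.lifted y n‖ ≤ b.scale y n := by
  have hT : ‖b.T^[n] y‖ ≤ 1 := by
    cases n with
    | zero => exact hy
    | succ n => rw [Function.iterate_succ_apply']; exact norm_radialRetraction_le _
  rw [lifted, norm_smul, Real.norm_of_nonneg (b.scale_pos y n).le]
  exact mul_le_of_le_one_right (b.scale_pos y n).le hT

lemma supCoeff_lifted_le (n : ℕ) : b.supCoeff (b.lifted y n) ≤ b.liftedHead y n := by
  rw [lifted, supCoeff_smul _ (b.scale_pos y n).le]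
  exact mul_le_mul_of_nonneg_left (b.supCoeff_le_head _) (b.scale_pos y n).le

lemma supCoeff_lifted_succ (n : ℕ) : b.supCoeff (b.lifted y (n + 1)) = b.liftedHead y n := by
  rw [lifted_succ, supCoeff_cons, abs_of_pos (show 0 < b.liftedHead y n from
    mul_pos (b.scale_pos y n) (b.head_pos _))]
  exact max_eq_left (b.supCoeff_lifted_le y n)

lemma liftedHead_zero : b.liftedHead y 0 = b.head y := by
  rw [liftedHead, scale_zero, one_mul, Function.iterate_zero_apply]

lemma monotone_liftedHead : Monotone (b.liftedHead y) :=
  monotone_nat_of_le_succ fun n => (b.supCoeff_lifted_succ y n).ge.trans (b.supCoeff_lifted_le y _)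

lemma coeff_lifted (n m : ℕ) :
    b.coeff (b.lifted y n) m = if m < n then b.liftedHead y (n - 1 - m) else b.coeff y (m - n) := by
  induction n generalizing m with
  | zero => simp [lifted, scale_zero]
  | succ n ih =>
    rw [lifted_succ, coeff_cons]
    rcases m with _ | m
    · simp
    · simp only [Nat.add_sub_cancel, ih, Nat.add_lt_add_iff_right, if_neg m.succ_ne_zero]
      split_ifs <;> congr 1 <;> omega

lemma shift_lifted (k j : ℕ) :
    b.shift j (b.lifted y k) = b.lifted y (k + j) - b.partialSum (b.lifted y (k + j)) j :=
  b.coeff_injective <| by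
    funext m
    simp only [coeff_shift, coeff_sub, coeff_partialSum, Pi.sub_apply, coeff_lifted]
    split_ifs <;> simp only [sub_zero, sub_self] <;> first | omega | (congr 1; omega)

lemma norm_lifted_le_of_le {k n : ℕ} (hkn : k ≤ n) :
    ‖b.lifted y k‖ ≤ b.C * (1 + b.C) * ‖b.lifted y n‖ := by
  obtain ⟨j, rfl⟩ := Nat.exists_eq_add_of_le hkn
  calc ‖b.lifted y k‖ ≤ b.C * ‖b.shift j (b.lifted y k)‖ := b.norm_le_shift j _
    _ ≤ b.C * (‖b.lifted y (k + j)‖ + b.C * ‖b.lifted y (k + j)‖) := by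
        rw [shift_lifted]
        exact mul_le_mul_of_nonneg_left
          ((norm_sub_le _ _).trans (add_le_add_right (b.norm_partialSum_le _ j) _)) b.C_pos.le
    _ = b.C * (1 + b.C) * ‖b.lifted y (k + j)‖ := by ring

lemma scale_le_of_le {n N : ℕ} (hnN : n ≤ N) :
    b.scale y n ≤ max 1 (b.C * (1 + b.C) * ‖b.lifted y N‖) := by
  induction n with
  | zero => exact (b.scale_zero y).trans_le (le_max_left _ _)
  | succ n ih =>
    rw [scale_succ_eq_max]
    exact max_le (ih (by omega)) ((b.norm_lifted_le_of_le y hnN).trans (le_max_right _ _))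

lemma bumpRadius_le_norm_iterate {n : ℕ} (hn : 1 < b.scale y n) :
    b.bumpRadius ≤ ‖b.T^[n] y‖ := by
  have hle := b.scale_le_of_le y le_rfl (n := n)
  rw [le_max_iff, or_iff_right hn.not_ge, lifted, norm_smul,
    Real.norm_of_nonneg (b.scale_pos y n).le] at hle
  have hD : 0 < b.C * (1 + b.C) := by have := b.C_pos; positivity
  rw [bumpRadius, inv_le_iff_one_le_mul₀' hD]
  nlinarith [b.scale_pos y n]

lemma head_mul_norm_sum_range_le (hy : ‖y‖ ≤ 1) (N : ℕ) :
    b.head y * ‖∑ n ∈ range N, b.x n‖ ≤ b.C * (b.C * b.scale y N) := by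
  have hh := b.head_pos y
  calc b.head y * ‖∑ n ∈ range N, b.x n‖ = ‖∑ n ∈ range N, b.head y • b.x n‖ := by
        rw [← smul_sum, norm_smul, Real.norm_of_nonneg hh.le]
    _ ≤ b.C * ‖b.partialSum (b.lifted y N) N‖ := by
        refine b.isUnconditional.norm_sum_le_of_abs_le _ fun n hn => ?_
        rw [coeff_lifted, if_pos (mem_range.1 hn), abs_of_pos hh, ← b.liftedHead_zero y]
        exact (b.monotone_liftedHead y (Nat.zero_le _)).trans (le_abs_self _)
    _ ≤ b.C * (b.C * b.scale y N) := by
        have := b.C_pos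
        gcongr
        exact (b.norm_partialSum_le _ N).trans
          (mul_le_mul_of_nonneg_left (b.norm_lifted_le_scale y hy N) b.C_pos.le)

lemma tendsto_scale (hunb : ¬ BddAbove (Set.range fun N => ‖∑ n ∈ range N, b.x n‖))
    (hy : ‖y‖ ≤ 1) : Tendsto (b.scale y) atTop atTop := by
  refine tendsto_atTop_atTop_of_monotone (b.monotone_scale y) fun R => ?_
  obtain ⟨_, ⟨N, rfl⟩, hN⟩ := not_bddAbove_iff.1 hunb (b.C * (b.C * R) / b.head y)
  refine ⟨N, ?_⟩
  have hC := b.C_pos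
  have h := (div_lt_iff₀' (b.head_pos y)).1 hN |>.trans_le (b.head_mul_norm_sum_range_le y hy N)
  exact (mul_lt_mul_iff_right₀ hC).1 ((mul_lt_mul_iff_right₀ hC).1 h) |>.le

lemma eventually_liftedHead_succ_eq
    (hunb : ¬ BddAbove (Set.range fun N => ‖∑ n ∈ range N, b.x n‖)) (hy : ‖y‖ ≤ 1) :
    ∀ᶠ n in atTop, b.liftedHead y (n + 1) = b.liftedHead y n := by
  filter_upwards [(tendsto_add_atTop_iff_nat 1).2 (b.tendsto_scale y hunb hy)
    |>.eventually_gt_atTop 1] with n hn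
  rw [liftedHead, b.head_eq_supCoeff (b.bumpRadius_le_norm_iterate y hn),
    ← supCoeff_smul _ (b.scale_pos y _).le]
  exact b.supCoeff_lifted_succ y n

lemma lifted_succ_sub_lifted (n : ℕ) :
    b.lifted y (n + 2) - b.lifted y (n + 1)
      = (b.liftedHead y (n + 1) - b.liftedHead y n) • b.x 0
        + b.shift 1 (b.lifted y (n + 1) - b.lifted y n) := by
  rw [lifted_succ, b.lifted_succ y n, cons, cons, shift_sub]
  module

lemma exists_eventually_norm_lifted_succ_sub_le
    (hunb : ¬ BddAbove (Set.range fun N => ‖∑ n ∈ range N, b.x n‖)) (hy : ‖y‖ ≤ 1) :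
    ∃ K, ∀ᶠ n in atTop, ‖b.lifted y (n + 1) - b.lifted y n‖ ≤ K := by
  obtain ⟨n₀, hn₀⟩ := eventually_atTop.1 (b.eventually_liftedHead_succ_eq y hunb hy)
  have hshift (k : ℕ) : b.lifted y (n₀ + k + 1) - b.lifted y (n₀ + k)
      = b.shift k (b.lifted y (n₀ + 1) - b.lifted y n₀) := by
    induction k with
    | zero => rw [shift_zero]; rfl
    | succ k ih =>
      rw [← add_assoc, lifted_succ_sub_lifted, hn₀ _ (by omega), sub_self, zero_smul, zero_add,
        ih, shift_one_shift]
  refine ⟨b.C * ‖b.lifted y (n₀ + 1) - b.lifted y n₀‖, eventually_atTop.2 ⟨n₀, fun n hn => ?_⟩⟩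
  obtain ⟨k, rfl⟩ := Nat.exists_eq_add_of_le hn
  rw [hshift]
  exact b.norm_shift_le k _

lemma norm_iterate_succ_sub_le (hy : ‖y‖ ≤ 1) (n : ℕ) :
    ‖b.T^[n + 1] y - b.T^[n] y‖ ≤ 2 * ‖b.lifted y (n + 1) - b.lifted y n‖ / b.scale y n := by
  rw [iterate_eq_inv_smul_lifted, b.iterate_eq_inv_smul_lifted y n]
  refine norm_inv_smul_sub_inv_smul_le (b.scale_pos y n) (b.monotone_scale y n.le_succ)
    (b.norm_lifted_le_scale y hy n) ?_
  rw [scale_succ_eq_max]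
  refine max_le (le_add_of_nonneg_right (norm_nonneg _)) ?_
  calc ‖b.lifted y (n + 1)‖ ≤ ‖b.lifted y n‖ + ‖b.lifted y (n + 1) - b.lifted y n‖ :=
        norm_le_insert' _ _
    _ ≤ b.scale y n + ‖b.lifted y (n + 1) - b.lifted y n‖ := by
        gcongr; exact b.norm_lifted_le_scale y hy n

theorem tendsto_norm_iterate_succ_sub
    (hunb : ¬ BddAbove (Set.range fun N => ‖∑ n ∈ range N, b.x n‖)) (hy : ‖y‖ ≤ 1) :
    Tendsto (fun n => ‖b.T^[n + 1] y - b.T^[n] y‖) atTop (𝓝 0) := by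
  obtain ⟨K, hK⟩ := b.exists_eventually_norm_lifted_succ_sub_le y hunb hy
  refine squeeze_zero' (Eventually.of_forall fun n => norm_nonneg _) ?_
    ((tendsto_const_nhds (x := 2 * K)).div_atTop (b.tendsto_scale y hunb hy))
  filter_upwards [hK] with n hn
  exact (b.norm_iterate_succ_sub_le y hy n).trans (by gcongr; exact (b.scale_pos y n).le)

end Orbit

end SubsymmetricBasis

theorem SubsymmetricBasis.exists_x_eq {X : Type*} [NormedAddCommGroup X] [NormedSpace ℝ X]
    [CompleteSpace X] (x : ℕ → X)
    (hbasis : ∀ y : X, ∃! a : ℕ → ℝ,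
      Tendsto (fun N => ∑ i ∈ range N, a i • x i) atTop (𝓝 y))
    (hA : ∃ A, 0 < A ∧ ∀ n, A ≤ ‖x n‖) (hunc : ∃ C, IsUnconditional x C)
    (hsub : ∃ C : ℝ, 1 ≤ C ∧ ∀ φ : ℕ → ℕ, StrictMono φ →
      ∀ (s : Finset ℕ) (a : ℕ → ℝ),
        C⁻¹ * ‖∑ n ∈ s, a n • x n‖ ≤ ‖∑ n ∈ s, a n • x (φ n)‖ ∧
        ‖∑ n ∈ s, a n • x (φ n)‖ ≤ C * ‖∑ n ∈ s, a n • x n‖) :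
    ∃ b : SubsymmetricBasis X, b.x = x := by
  obtain ⟨A, hA, hAx⟩ := hA
  obtain ⟨C₁, hC₁⟩ := hunc
  obtain ⟨C₂, hC₂, hs⟩ := hsub
  have hshift (j : ℕ) := hs (· + j) fun _ _ h => Nat.add_lt_add_right h j
  have hC : C₂ ≤ max C₁ C₂ := le_max_right _ _
  exact ⟨{ x := x
           coeff y := (hbasis y).choose
           tendsto_sum_coeff y := (hbasis y).choose_spec.1
           coeff_eq_of_tendsto y a ha := ((hbasis y).choose_spec.2 a ha).symm
           C := max C₁ C₂
           one_le_C := hC₂.trans hC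
           isUnconditional := hC₁.mono (le_max_left _ _)
           norm_sum_shift_le j s a := (hshift j s a).2.trans (by gcongr)
           norm_sum_le_shift j s a :=
             ((inv_mul_le_iff₀ (by positivity)).1 (hshift j s a).1).trans (by gcongr)
           A := A
           A_pos := hA
           A_le_norm := hAx }, rfl⟩

/-- Let `X` be a real Banach space with a semi-normalized subsymmetric
Schauder basis and containing no subspace isomorphic to `c₀`.  Then there exists a
fixed-point-free Lipschitz asymptotically regular map `T : B_X → B_X`. -/
theorem statement5 {X : Type*} [NormedAddCommGroup X] [NormedSpace ℝ X] [CompleteSpace X]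
    (x : ℕ → X)
    (hbasis : ∀ y : X, ∃! a : ℕ → ℝ,
      Filter.Tendsto (fun N : ℕ => ∑ i ∈ Finset.range N, a i • x i)
        Filter.atTop (nhds y))
    (hsemi : ∃ A B : ℝ, 0 < A ∧ 0 < B ∧ ∀ n : ℕ, A ≤ ‖x n‖ ∧ ‖x n‖ ≤ B)
    (huncond : ∃ C : ℝ, 1 ≤ C ∧ ∀ (s : Finset ℕ) (a ε : ℕ → ℝ),
      (∀ n, ε n = 1 ∨ ε n = -1) →
      ‖∑ n ∈ s, (ε n * a n) • x n‖ ≤ C * ‖∑ n ∈ s, a n • x n‖)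
    (hsub : ∃ C : ℝ, 1 ≤ C ∧ ∀ φ : ℕ → ℕ, StrictMono φ →
      ∀ (s : Finset ℕ) (a : ℕ → ℝ),
        C⁻¹ * ‖∑ n ∈ s, a n • x n‖ ≤ ‖∑ n ∈ s, a n • x (φ n)‖ ∧
        ‖∑ n ∈ s, a n • x (φ n)‖ ≤ C * ‖∑ n ∈ s, a n • x n‖)
    (hnoc0 : ¬ ∃ (f : C₀(ℕ, ℝ) →L[ℝ] X) (c : ℝ), 0 < c ∧ ∀ u : C₀(ℕ, ℝ), c * ‖u‖ ≤ ‖f u‖) :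
    ∃ T : X → X,
      Set.MapsTo T (Metric.closedBall (0 : X) 1) (Metric.closedBall (0 : X) 1) ∧
      (∀ y ∈ Metric.closedBall (0 : X) 1, T y ≠ y) ∧
      (∃ L : ℝ, 0 ≤ L ∧ ∀ y ∈ Metric.closedBall (0 : X) 1,
        ∀ z ∈ Metric.closedBall (0 : X) 1, ‖T y - T z‖ ≤ L * ‖y - z‖) ∧
      (∀ y ∈ Metric.closedBall (0 : X) 1,
        Filter.Tendsto (fun n : ℕ => ‖T^[n + 1] y - T^[n] y‖) Filter.atTop (nhds 0)) := by
  obtain ⟨A, _, hA, -, hAx⟩ := hsemi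
  obtain ⟨C, -, hC⟩ := huncond
  obtain ⟨b, rfl⟩ :=
    SubsymmetricBasis.exists_x_eq x hbasis ⟨A, hA, fun n => (hAx n).1⟩ ⟨C, hC⟩ hsub
  have hunb := b.not_bddAbove_norm_sum_range hnoc0
  obtain ⟨K, hK⟩ := b.exists_lipschitzWith_T
  refine ⟨b.T, fun y _ => ?_, fun y _ => b.T_ne_self hunb y, ⟨K, K.2, fun y _ z _ => ?_⟩,
    fun y hy => b.tendsto_norm_iterate_succ_sub y hunb (by simpa using hy)⟩
  · simpa [SubsymmetricBasis.T] using norm_radialRetraction_le (b.cons (b.head y) y)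
  · simpa [dist_eq_norm] using hK.dist_le_mul y z
end

section
/- Let X be a real Banach space and let K ⊆ B_X be a nonempty bounded closed convex set that is a Lipschitz retract of B_X. (i) If there exists a uniformly Lipschitz fixed-point-free map F : K → K with d(F,K) = 0, then there exists a uniformly Lipschitz fixed-point-free map T : B_X → B_X with d(T,B_X) = 0. (ii) If there exists a Lipschitz fixed-point-free map F : K → K with d(F,K) = 0, then for every ε ∈ (0,1) there exists a (1+ε)-Lipschitz fixed-point-free map T : B_X → B_X with d(T,B_X) = 0. -/
/-!
Composing with the Lipschitz retraction `R : B_X → K` transfers everything from `K` to `B_X`: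
a fixed point `y` of `F ∘ R` lies in `K`, where `R y = y`, so it is a fixed point of `F`;
on `K` the map `F ∘ R` agrees with `F` (so `(F ∘ R)^[n+1] = F^[n] ∘ F ∘ R` and the minimal
displacement stays `0`). This gives (i). For (ii), `F ∘ R` is only `L`-Lipschitz for some
possibly large `L`, and the averaged map `(1 - t) • id + t • (F ∘ R)` with `t` small is
`(1 - t + t L)`-Lipschitz, still fixed-point free, and displaces points by `t` times as much.
-/

open Metric Set NNReal

section Retraction

variable {α : Type*} {C D : Set α} {R F : α → α}

theorem comp_retraction_ne_self (hR : MapsTo R D C) (hRC : ∀ y ∈ C, R y = y)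
    (hF : MapsTo F C C) (hfree : ∀ y ∈ C, F y ≠ y) : ∀ y ∈ D, F (R y) ≠ y := by
  intro y hy hfix
  have hyC : y ∈ C := hfix ▸ hF (hR hy)
  rw [hRC y hyC] at hfix
  exact hfree y hyC hfix

theorem eqOn_iterate_comp_retraction (hRC : ∀ y ∈ C, R y = y) (hF : MapsTo F C C) (n : ℕ) :
    EqOn (F ∘ R)^[n] F^[n] C := by
  induction n with
  | zero => exact fun _ _ => rfl
  | succ n ih =>
    intro y hy
    rw [Function.iterate_succ_apply, Function.iterate_succ_apply, Function.comp_apply,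
      hRC y hy, ih (hF hy)]

theorem lipschitzOnWith_iterate_comp_retraction [PseudoEMetricSpace α] {KR KF : ℝ≥0}
    (hR : MapsTo R D C) (hRC : ∀ y ∈ C, R y = y) (hF : MapsTo F C C)
    (hRlip : LipschitzOnWith KR R D) (hFlip : ∀ n, LipschitzOnWith KF F^[n] C) (n : ℕ) :
    LipschitzOnWith (max 1 (KF * (KF * KR))) (F ∘ R)^[n] D := by
  cases n with
  | zero => exact (LipschitzWith.id.lipschitzOnWith).weaken (le_max_left _ _)
  | succ n =>
    have hFR : LipschitzOnWith (KF * KR) (F ∘ R) D := by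
      simpa using (hFlip 1).comp hRlip hR
    have hlip := ((hFlip n).comp hFR (hF.comp hR)).weaken (le_max_right 1 _)
    intro y hy z hz
    rw [Function.iterate_succ_apply, Function.iterate_succ_apply, Function.comp_apply,
      Function.comp_apply, eqOn_iterate_comp_retraction hRC hF n (hF (hR hy)),
      eqOn_iterate_comp_retraction hRC hF n (hF (hR hz))]
    exact hlip hy hz

end Retraction

section MinDisplacement

variable {E : Type*} [SeminormedAddCommGroup E]

noncomputable def minDisplacement (T : E → E) (C : Set E) : ℝ :=
  sInf ((fun y => ‖y - T y‖) '' C)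

theorem minDisplacement_eq_zero_of_le {C D : Set E} {F T : E → E} (hC : C.Nonempty)
    (hCD : C ⊆ D) (hF : minDisplacement F C = 0) (hle : ∀ y ∈ C, ‖y - T y‖ ≤ ‖y - F y‖) :
    minDisplacement T D = 0 := by
  refine csInf_eq_of_forall_ge_of_forall_gt_exists_lt ((hC.mono hCD).image _) ?_ ?_
  · rintro _ ⟨y, -, rfl⟩
    exact norm_nonneg _
  · intro η hη
    obtain ⟨_, ⟨y, hy, rfl⟩, hlt⟩ :=
      exists_lt_of_csInf_lt (hC.image _) (show minDisplacement F C < η from hF ▸ hη)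
    exact ⟨_, ⟨y, hCD hy, rfl⟩, (hle y hy).trans_lt hlt⟩

end MinDisplacement

section Averaged

variable {E : Type*} [SeminormedAddCommGroup E] [NormedSpace ℝ E]

def averagedMap (t : ℝ) (G : E → E) (y : E) : E :=
  (1 - t) • y + t • G y

variable {t : ℝ} {G : E → E}

theorem sub_averagedMap (y : E) : y - averagedMap t G y = t • (y - G y) := by
  simp only [averagedMap]
  module

theorem averagedMap_ne_self {y : E} (ht : t ≠ 0) (hG : G y ≠ y) : averagedMap t G y ≠ y := by
  intro hfix
  have h : t • (y - G y) = 0 := by rw [← sub_averagedMap, hfix, sub_self]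
  exact hG (sub_eq_zero.mp ((smul_eq_zero.mp h).resolve_left ht)).symm

theorem norm_sub_averagedMap_le (ht0 : 0 ≤ t) (ht1 : t ≤ 1) (y : E) :
    ‖y - averagedMap t G y‖ ≤ ‖y - G y‖ := by
  rw [sub_averagedMap, norm_smul, Real.norm_of_nonneg ht0]
  exact mul_le_of_le_one_left (norm_nonneg _) ht1

theorem averagedMap_mapsTo {D : Set E} (hD : Convex ℝ D) (hG : MapsTo G D D) (ht0 : 0 ≤ t)
    (ht1 : t ≤ 1) : MapsTo (averagedMap t G) D D :=
  fun _ hy => hD hy (hG hy) (sub_nonneg.mpr ht1) ht0 (sub_add_cancel 1 t)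

theorem norm_averagedMap_sub_le {D : Set E} {K : ℝ≥0} (hG : LipschitzOnWith K G D)
    (ht0 : 0 ≤ t) (ht1 : t ≤ 1) {y z : E} (hy : y ∈ D) (hz : z ∈ D) :
    ‖averagedMap t G y - averagedMap t G z‖ ≤ (1 - t + t * K) * ‖y - z‖ := by
  have hdiff : averagedMap t G y - averagedMap t G z = (1 - t) • (y - z) + t • (G y - G z) := by
    simp only [averagedMap]
    module
  calc ‖averagedMap t G y - averagedMap t G z‖
      ≤ (1 - t) * ‖y - z‖ + t * ‖G y - G z‖ := by
        rw [hdiff]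
        refine (norm_add_le _ _).trans_eq ?_
        rw [norm_smul, norm_smul, Real.norm_of_nonneg (sub_nonneg.mpr ht1),
          Real.norm_of_nonneg ht0]
    _ ≤ (1 - t) * ‖y - z‖ + t * (K * ‖y - z‖) := by
        gcongr
        exact lipschitzOnWith_iff_norm_sub_le.mp hG hy hz
    _ = (1 - t + t * K) * ‖y - z‖ := by ring

end Averaged

section Transfer

variable {E : Type*} [SeminormedAddCommGroup E] {C D : Set E} {R F : E → E} {KR KF : ℝ≥0}

theorem exists_uniformlyLipschitz_fixedPointFree_of_retract (hC : C.Nonempty) (hCD : C ⊆ D)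
    (hR : MapsTo R D C) (hRC : ∀ y ∈ C, R y = y) (hRlip : LipschitzOnWith KR R D)
    (hF : MapsTo F C C) (hfree : ∀ y ∈ C, F y ≠ y) (hFlip : ∀ n, LipschitzOnWith KF F^[n] C)
    (hF0 : minDisplacement F C = 0) :
    ∃ T : E → E, MapsTo T D D ∧ (∀ y ∈ D, T y ≠ y) ∧
      (∃ K : ℝ≥0, ∀ n, LipschitzOnWith K T^[n] D) ∧ minDisplacement T D = 0 :=
  ⟨F ∘ R, fun _ hy => hCD (hF (hR hy)), fun y hy => comp_retraction_ne_self hR hRC hF hfree y hy,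
    ⟨_, lipschitzOnWith_iterate_comp_retraction hR hRC hF hRlip hFlip⟩,
    minDisplacement_eq_zero_of_le hC hCD hF0 fun y hy => by rw [Function.comp_apply, hRC y hy]⟩

theorem exists_lipschitz_fixedPointFree_of_retract [NormedSpace ℝ E] (hD : Convex ℝ D)
    (hC : C.Nonempty) (hCD : C ⊆ D) (hR : MapsTo R D C) (hRC : ∀ y ∈ C, R y = y)
    (hRlip : LipschitzOnWith KR R D) (hF : MapsTo F C C) (hfree : ∀ y ∈ C, F y ≠ y)
    (hFlip : LipschitzOnWith KF F C) (hF0 : minDisplacement F C = 0) {ε : ℝ} (hε : 0 < ε) :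
    ∃ T : E → E, MapsTo T D D ∧ (∀ y ∈ D, T y ≠ y) ∧
      (∀ y ∈ D, ∀ z ∈ D, ‖T y - T z‖ ≤ (1 + ε) * ‖y - z‖) ∧ minDisplacement T D = 0 := by
  set K := KF * KR
  have hG : LipschitzOnWith K (F ∘ R) D := hFlip.comp hRlip hR
  have hpos : 0 < (K : ℝ) + 1 + ε := by positivity
  set t := ε / (K + 1 + ε)
  have ht0 : 0 < t := div_pos hε hpos
  have ht1 : t ≤ 1 := (div_le_one hpos).mpr (by linarith [K.2])
  have htK : t * K ≤ ε := by
    rw [div_mul_eq_mul_div, div_le_iff₀ hpos]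
    nlinarith [K.2]
  refine ⟨averagedMap t (F ∘ R),
    averagedMap_mapsTo hD (fun _ hy => hCD (hF (hR hy))) ht0.le ht1,
    fun y hy => averagedMap_ne_self ht0.ne' (comp_retraction_ne_self hR hRC hF hfree y hy),
    fun y hy z hz => (norm_averagedMap_sub_le hG ht0.le ht1 hy hz).trans ?_,
    minDisplacement_eq_zero_of_le hC hCD hF0 fun y hy => ?_⟩
  · gcongr
    linarith
  · exact (norm_sub_averagedMap_le ht0.le ht1 y).trans_eq (by rw [Function.comp_apply, hRC y hy])

end Transfer

theorem statement8_general {X : Type*} [NormedAddCommGroup X] [NormedSpace ℝ X]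
    (K : Set X) (hKne : K.Nonempty)
    (hKB : K ⊆ Metric.closedBall (0 : X) 1)
    (hretr : ∃ R : X → X, Set.MapsTo R (Metric.closedBall (0 : X) 1) K ∧
      (∀ y ∈ K, R y = y) ∧
      ∃ L : ℝ, 0 ≤ L ∧ ∀ y ∈ Metric.closedBall (0 : X) 1,
        ∀ z ∈ Metric.closedBall (0 : X) 1, ‖R y - R z‖ ≤ L * ‖y - z‖) :
    ((∃ F : X → X, Set.MapsTo F K K ∧ (∀ y ∈ K, F y ≠ y) ∧
        (∃ L : ℝ, 0 ≤ L ∧ ∀ n : ℕ, ∀ y ∈ K, ∀ z ∈ K,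
          ‖F^[n] y - F^[n] z‖ ≤ L * ‖y - z‖) ∧
        sInf ((fun y => ‖y - F y‖) '' K) = 0) →
      ∃ T : X → X,
        Set.MapsTo T (Metric.closedBall (0 : X) 1) (Metric.closedBall (0 : X) 1) ∧
        (∀ y ∈ Metric.closedBall (0 : X) 1, T y ≠ y) ∧
        (∃ L : ℝ, 0 ≤ L ∧ ∀ n : ℕ, ∀ y ∈ Metric.closedBall (0 : X) 1,
          ∀ z ∈ Metric.closedBall (0 : X) 1, ‖T^[n] y - T^[n] z‖ ≤ L * ‖y - z‖) ∧
        sInf ((fun y => ‖y - T y‖) '' Metric.closedBall (0 : X) 1) = 0) ∧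
    ((∃ F : X → X, Set.MapsTo F K K ∧ (∀ y ∈ K, F y ≠ y) ∧
        (∃ L : ℝ, 0 ≤ L ∧ ∀ y ∈ K, ∀ z ∈ K, ‖F y - F z‖ ≤ L * ‖y - z‖) ∧
        sInf ((fun y => ‖y - F y‖) '' K) = 0) →
      ∀ ε : ℝ, ε ∈ Set.Ioo (0 : ℝ) 1 →
        ∃ T : X → X,
          Set.MapsTo T (Metric.closedBall (0 : X) 1) (Metric.closedBall (0 : X) 1) ∧
          (∀ y ∈ Metric.closedBall (0 : X) 1, T y ≠ y) ∧
          (∀ y ∈ Metric.closedBall (0 : X) 1, ∀ z ∈ Metric.closedBall (0 : X) 1,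
            ‖T y - T z‖ ≤ (1 + ε) * ‖y - z‖) ∧
          sInf ((fun y => ‖y - T y‖) '' Metric.closedBall (0 : X) 1) = 0) := by
  obtain ⟨R, hR, hRC, LR, hLR, hRlip⟩ := hretr
  have hRlip' : LipschitzOnWith ⟨LR, hLR⟩ R (closedBall 0 1) :=
    lipschitzOnWith_iff_norm_sub_le.mpr hRlip
  refine ⟨?_, ?_⟩
  · rintro ⟨F, hF, hfree, ⟨LF, hLF, hFlip⟩, hF0⟩
    obtain ⟨T, hT, hTfree, ⟨K, hK⟩, hT0⟩ :=
      exists_uniformlyLipschitz_fixedPointFree_of_retract hKne hKB hR hRC hRlip' hF hfree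
        (fun n => lipschitzOnWith_iff_norm_sub_le (C := ⟨LF, hLF⟩) |>.mpr (hFlip n)) hF0
    exact ⟨T, hT, hTfree, ⟨K, K.2, fun n => lipschitzOnWith_iff_norm_sub_le.mp (hK n)⟩, hT0⟩
  · rintro ⟨F, hF, hfree, ⟨LF, hLF, hFlip⟩, hF0⟩ ε ⟨hε, -⟩
    exact exists_lipschitz_fixedPointFree_of_retract (convex_closedBall 0 1) hKne hKB hR hRC
      hRlip' hF hfree (lipschitzOnWith_iff_norm_sub_le (C := ⟨LF, hLF⟩) |>.mpr hFlip) hF0 hε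

/-- Let `K ⊆ B_X` be a nonempty bounded closed convex Lipschitz retract of
`B_X` in a real Banach space `X`.  (i) If `K` admits a uniformly Lipschitz fixed-point-free
self-map with null minimal displacement, so does `B_X`.  (ii) If `K` admits a Lipschitz
fixed-point-free self-map with null minimal displacement, then for every `ε ∈ (0,1)` the ball
`B_X` admits a `(1+ε)`-Lipschitz fixed-point-free self-map with null minimal displacement. -/
theorem statement8 {X : Type*} [NormedAddCommGroup X] [NormedSpace ℝ X] [CompleteSpace X]
    (K : Set X) (hKne : K.Nonempty) (hKb : Bornology.IsBounded K) (hKcl : IsClosed K)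
    (hKcv : Convex ℝ K) (hKB : K ⊆ Metric.closedBall (0 : X) 1)
    (hretr : ∃ R : X → X, Set.MapsTo R (Metric.closedBall (0 : X) 1) K ∧
      (∀ y ∈ K, R y = y) ∧
      ∃ L : ℝ, 0 ≤ L ∧ ∀ y ∈ Metric.closedBall (0 : X) 1,
        ∀ z ∈ Metric.closedBall (0 : X) 1, ‖R y - R z‖ ≤ L * ‖y - z‖) :
    ((∃ F : X → X, Set.MapsTo F K K ∧ (∀ y ∈ K, F y ≠ y) ∧
        (∃ L : ℝ, 0 ≤ L ∧ ∀ n : ℕ, ∀ y ∈ K, ∀ z ∈ K,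
          ‖F^[n] y - F^[n] z‖ ≤ L * ‖y - z‖) ∧
        sInf ((fun y => ‖y - F y‖) '' K) = 0) →
      ∃ T : X → X,
        Set.MapsTo T (Metric.closedBall (0 : X) 1) (Metric.closedBall (0 : X) 1) ∧
        (∀ y ∈ Metric.closedBall (0 : X) 1, T y ≠ y) ∧
        (∃ L : ℝ, 0 ≤ L ∧ ∀ n : ℕ, ∀ y ∈ Metric.closedBall (0 : X) 1,
          ∀ z ∈ Metric.closedBall (0 : X) 1, ‖T^[n] y - T^[n] z‖ ≤ L * ‖y - z‖) ∧
        sInf ((fun y => ‖y - T y‖) '' Metric.closedBall (0 : X) 1) = 0) ∧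
    ((∃ F : X → X, Set.MapsTo F K K ∧ (∀ y ∈ K, F y ≠ y) ∧
        (∃ L : ℝ, 0 ≤ L ∧ ∀ y ∈ K, ∀ z ∈ K, ‖F y - F z‖ ≤ L * ‖y - z‖) ∧
        sInf ((fun y => ‖y - F y‖) '' K) = 0) →
      ∀ ε : ℝ, ε ∈ Set.Ioo (0 : ℝ) 1 →
        ∃ T : X → X,
          Set.MapsTo T (Metric.closedBall (0 : X) 1) (Metric.closedBall (0 : X) 1) ∧
          (∀ y ∈ Metric.closedBall (0 : X) 1, T y ≠ y) ∧
          (∀ y ∈ Metric.closedBall (0 : X) 1, ∀ z ∈ Metric.closedBall (0 : X) 1,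
            ‖T y - T z‖ ≤ (1 + ε) * ‖y - z‖) ∧
          sInf ((fun y => ‖y - T y‖) '' Metric.closedBall (0 : X) 1) = 0) :=
  statement8_general K hKne hKB hretr
end

section
/- Let X be a real Banach space containing an isomorphic copy of c₀. Then for every ε ∈ (0,1) there exist a nonempty bounded closed convex set K ⊆ X and a fixed-point-free map F : K → K that is uniformly asymptotically regular and uniformly (1+ε)-Lipschitz, i.e. ‖Fⁿ x − Fⁿ y‖ ≤ (1+ε)‖x − y‖ for all x, y ∈ K and all n ∈ ℕ. -/
open Metric Set Filter Topology
open scoped ZeroAtInfty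

/-!
James's non-distortion theorem for `c₀` provides an embedding `g : c₀ → X` with
`‖t‖ ≤ ‖g t‖ ≤ (1 + ε) ‖t‖`. Let `σ` be the infimum over `n` of the norm of the given isomorphism
`f` on sequences vanishing below `n`: far enough out `f` has norm below `σ (1 + δ)`, while every
tail contains normalized finitely supported blocks `b` with `‖f b‖ > σ (1 - δ)`. Sending the unit vectors to
consecutive blocks gives a map bounded above by `σ (1 + δ)`, and reflecting a vector in its largest
coordinate bounds it below by `σ (1 - 3δ)`.

In `c₀` take the cube `[0,1]^ℕ ∩ c₀` and the average `F = (I + T) / 2` of the isometry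
`T t = (1, t₀, t₁, …)`, a fixed point of which would be the constant sequence `1`. `F` is affine
with linear part `(1 + S) / 2`, `S` the right shift, so its iterates are nonexpansive, and
`Fⁿ⁺¹ t - Fⁿ t = 2⁻ⁿ⁻¹ (1 + S)ⁿ (e₀ + S t - t)` has coordinates bounded through the binomial
coefficients and their total variation by `(3/2) C(n, ⌊n/2⌋) / 2ⁿ = O(n^(-1/2))`. Transporting
`F` by `g` gives the map on `g '' [0,1]^ℕ`.
-/

section Binomial

open Finset

theorem Nat.centralBinom_sq_mul_le : ∀ m : ℕ, m.centralBinom ^ 2 * (2 * m + 1) ≤ 16 ^ m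
  | 0 => by simp
  | m + 1 => by
    refine Nat.le_of_mul_le_mul_left ?_ (show 0 < (m + 1) ^ 2 by positivity)
    calc (m + 1) ^ 2 * ((m + 1).centralBinom ^ 2 * (2 * (m + 1) + 1))
        = ((m + 1) * (m + 1).centralBinom) ^ 2 * (2 * m + 3) := by ring
      _ = 4 * (2 * m + 1) * (2 * m + 3) * (m.centralBinom ^ 2 * (2 * m + 1)) := by
        rw [Nat.succ_mul_centralBinom_succ]; ring
      _ ≤ 4 * (2 * m + 2) ^ 2 * 16 ^ m :=
        Nat.mul_le_mul (by nlinarith) (Nat.centralBinom_sq_mul_le m)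
      _ = (m + 1) ^ 2 * 16 ^ (m + 1) := by ring

theorem Nat.choose_succ_le_two_mul_choose_half (n k : ℕ) :
    (n + 1).choose k ≤ 2 * n.choose (n / 2) := by
  rcases k with _ | k
  · have := Nat.choose_pos (Nat.div_le_self n 2)
    simp only [Nat.choose_zero_right]
    omega
  · rw [Nat.choose_succ_succ]
    linarith [Nat.choose_le_middle k n, Nat.choose_le_middle (k + 1) n]

theorem Nat.choose_succ_le_choose_of_half_le {n k : ℕ} (h : n / 2 ≤ k) :
    n.choose (k + 1) ≤ n.choose k := by
  refine Nat.le_of_mul_le_mul_right ?_ k.succ_pos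
  rw [Nat.choose_succ_right_eq]
  exact Nat.mul_le_mul_left _ (by omega)

noncomputable def middleBinomProb (n : ℕ) : ℝ := n.choose (n / 2) / 2 ^ n

lemma middleBinomProb_nonneg (n : ℕ) : 0 ≤ middleBinomProb n := by
  unfold middleBinomProb; positivity

lemma middleBinomProb_succ_le (n : ℕ) : middleBinomProb (n + 1) ≤ middleBinomProb n := by
  rw [middleBinomProb, middleBinomProb, pow_succ, div_le_div_iff₀ (by positivity) (by positivity)]
  have : ((n + 1).choose ((n + 1) / 2) : ℝ) ≤ 2 * n.choose (n / 2) := by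
    exact_mod_cast Nat.choose_succ_le_two_mul_choose_half n _
  nlinarith [pow_pos (two_pos (α := ℝ)) n]

lemma middleBinomProb_sq_mul_le (n : ℕ) : middleBinomProb n ^ 2 * n ≤ 1 := by
  have heven (m : ℕ) : middleBinomProb (2 * m) ^ 2 * (2 * m + 1) ≤ 1 := by
    rw [middleBinomProb, show 2 * m / 2 = m by omega, ← Nat.centralBinom_eq_two_mul_choose,
      div_pow, div_mul_eq_mul_div, div_le_one (by positivity),
      show ((2 : ℝ) ^ (2 * m)) ^ 2 = 16 ^ m by
        rw [← pow_mul, show (16 : ℝ) = 2 ^ 4 by norm_num, ← pow_mul]; ring_nf]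
    exact_mod_cast Nat.centralBinom_sq_mul_le m
  obtain ⟨m, rfl | rfl⟩ := Nat.even_or_odd' n
  · push_cast
    nlinarith [heven m, sq_nonneg (middleBinomProb (2 * m))]
  · calc middleBinomProb (2 * m + 1) ^ 2 * ((2 * m + 1 : ℕ) : ℝ)
        ≤ middleBinomProb (2 * m) ^ 2 * (2 * m + 1) := by
          push_cast
          gcongr
          exacts [middleBinomProb_nonneg _, middleBinomProb_succ_le _]
      _ ≤ 1 := heven m

lemma tendsto_middleBinomProb : Tendsto middleBinomProb atTop (𝓝 0) := by
  have hle : ∀ᶠ n : ℕ in atTop, middleBinomProb n ≤ √(1 / n) := by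
    filter_upwards [eventually_gt_atTop 0] with n hn
    refine Real.le_sqrt_of_sq_le ((le_div_iff₀ (by exact_mod_cast hn)).2 ?_)
    exact middleBinomProb_sq_mul_le n
  refine squeeze_zero' (.of_forall middleBinomProb_nonneg) hle ?_
  simpa using tendsto_one_div_atTop_nhds_zero_nat.sqrt

theorem sum_abs_choose_sub_choose_succ (n : ℕ) :
    ∑ k ∈ range (n + 1), |(n.choose k : ℝ) - n.choose (k + 1)| = 2 * n.choose (n / 2) - 1 := by
  have hleft : ∑ k ∈ range (n / 2), |(n.choose k : ℝ) - n.choose (k + 1)|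
      = n.choose (n / 2) - 1 := by
    rw [sum_congr rfl fun k hk => (abs_sub_comm _ _).trans (abs_of_nonneg (sub_nonneg.2
      (Nat.cast_le.2 (Nat.choose_le_succ_of_lt_half_left (mem_range.1 hk))))),
      sum_range_sub (fun k => (n.choose k : ℝ))]
    simp
  have hright : ∑ k ∈ Ico (n / 2) (n + 1), |(n.choose k : ℝ) - n.choose (k + 1)|
      = n.choose (n / 2) := by
    rw [sum_congr rfl fun k hk => (abs_of_nonneg (sub_nonneg.2 (Nat.cast_le.2
      (Nat.choose_succ_le_choose_of_half_le (mem_Ico.1 hk).1)))).trans (neg_sub _ _).symm,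
      sum_neg_distrib, sum_Ico_sub (fun k => (n.choose k : ℝ)) (by omega)]
    simp
  rw [← sum_range_add_sum_Ico _ (show n / 2 ≤ n + 1 by omega), hleft, hright]
  ring

theorem abs_sum_choose_mul_sub_le (n : ℕ) (x : ℕ → ℝ) {M : ℝ} (hx : ∀ k, |x k| ≤ M) :
    |∑ k ∈ range (n + 1), (n.choose k : ℝ) * (x (k + 1) - x k)| ≤ 2 * n.choose (n / 2) * M := by
  have habel : ∑ k ∈ range (n + 1), (n.choose k : ℝ) * (x (k + 1) - x k)
      = ∑ k ∈ range (n + 1), ((n.choose k : ℝ) - n.choose (k + 1)) * x (k + 1) - x 0 := by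
    simp only [mul_sub, sub_mul, sum_sub_distrib]
    rw [sum_range_succ' (fun k => (n.choose k : ℝ) * x k),
      sum_range_succ (fun k => (n.choose (k + 1) : ℝ) * x (k + 1))]
    simp only [Nat.choose_succ_self, Nat.cast_zero, zero_mul, add_zero, Nat.choose_zero_right,
      Nat.cast_one, one_mul]
    ring
  rw [habel]
  calc _ ≤ |∑ k ∈ range (n + 1), ((n.choose k : ℝ) - n.choose (k + 1)) * x (k + 1)| + |x 0| :=
        abs_sub _ _
    _ ≤ ∑ k ∈ range (n + 1), |(n.choose k : ℝ) - n.choose (k + 1)| * M + M := by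
        refine add_le_add ((abs_sum_le_sum_abs _ _).trans (sum_le_sum fun k _ => ?_)) (hx 0)
        rw [abs_mul]
        exact mul_le_mul_of_nonneg_left (hx _) (abs_nonneg _)
    _ = 2 * n.choose (n / 2) * M := by rw [← sum_mul, sum_abs_choose_sub_choose_succ]; ring

end Binomial

section Conjugation

variable {E X : Type*}

def UniformlyAsymptoticallyRegularOn [SeminormedAddCommGroup X] (F : X → X) (K : Set X) : Prop :=
  ∀ δ : ℝ, 0 < δ → ∃ N : ℕ, ∀ n : ℕ, N ≤ n → ∀ y ∈ K, ‖F^[n + 1] y - F^[n] y‖ < δ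

def UniformlyLipschitzOn [SeminormedAddCommGroup X] (L : ℝ) (F : X → X) (K : Set X) : Prop :=
  ∀ n : ℕ, ∀ y ∈ K, ∀ z ∈ K, ‖F^[n] y - F^[n] z‖ ≤ L * ‖y - z‖

noncomputable def conjMap [Nonempty E] (g : E → X) (F : E → E) : X → X :=
  g ∘ F ∘ Function.invFun g

variable [Nonempty E] {g : E → X} {F : E → E} {K : Set E}

lemma conjMap_apply (hg : g.Injective) (t : E) : conjMap g F (g t) = g (F t) := by
  simp [conjMap, Function.leftInverse_invFun hg t]

lemma iterate_conjMap_apply (hg : g.Injective) (n : ℕ) (t : E) :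
    (conjMap g F)^[n] (g t) = g (F^[n] t) :=
  (Function.Semiconj.iterate_right (fun t => (conjMap_apply hg t).symm) n t).symm

lemma Set.MapsTo.conjMap (hg : g.Injective) (h : MapsTo F K K) :
    MapsTo (conjMap g F) (g '' K) (g '' K) := by
  rintro _ ⟨t, ht, rfl⟩
  rw [conjMap_apply hg]
  exact mem_image_of_mem g (h ht)

lemma conjMap_ne_self (hg : g.Injective) (h : ∀ t ∈ K, F t ≠ t) :
    ∀ y ∈ g '' K, conjMap g F y ≠ y := by
  rintro _ ⟨t, ht, rfl⟩
  rw [conjMap_apply hg]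
  exact hg.ne (h t ht)

lemma UniformlyAsymptoticallyRegularOn.conjMap [SeminormedAddCommGroup E]
    [SeminormedAddCommGroup X] (hg : g.Injective) (hgu : UniformContinuous g)
    (h : UniformlyAsymptoticallyRegularOn F K) :
    UniformlyAsymptoticallyRegularOn (conjMap g F) (g '' K) := by
  intro δ hδ
  obtain ⟨δ', hδ', hgδ⟩ := Metric.uniformContinuous_iff.1 hgu δ hδ
  obtain ⟨N, hN⟩ := h δ' hδ'
  refine ⟨N, fun n hn => ?_⟩
  rintro _ ⟨t, ht, rfl⟩
  rw [iterate_conjMap_apply hg, iterate_conjMap_apply hg, ← dist_eq_norm]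
  exact hgδ (by rw [dist_eq_norm]; exact hN n hn t ht)

lemma UniformlyLipschitzOn.conjMap [NormedAddCommGroup E] [NormedSpace ℝ E]
    [NormedAddCommGroup X] [NormedSpace ℝ X] {g : E →L[ℝ] X} (hg : ∀ t, ‖t‖ ≤ ‖g t‖)
    {M L : ℝ} (hM : 0 ≤ M) (hL : ‖g‖ * M ≤ L) (h : UniformlyLipschitzOn M F K) :
    UniformlyLipschitzOn L (conjMap g F) (g '' K) := by
  have hinj : Function.Injective g :=
    (g.antilipschitz_of_bound (K := 1) (by simpa using hg)).injective
  rintro n _ ⟨y, hy, rfl⟩ _ ⟨z, hz, rfl⟩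
  rw [iterate_conjMap_apply hinj, iterate_conjMap_apply hinj, ← map_sub, ← map_sub]
  calc ‖g (F^[n] y - F^[n] z)‖ ≤ ‖g‖ * (M * ‖y - z‖) :=
        (g.le_opNorm _).trans (mul_le_mul_of_nonneg_left (h n y hy z hz) (norm_nonneg g))
    _ ≤ L * ‖g (y - z)‖ := by
        rw [← mul_assoc]
        exact mul_le_mul hL (hg _) (norm_nonneg _) ((mul_nonneg (norm_nonneg g) hM).trans hL)

end Conjugation

lemma ContinuousLinearMap.exists_le_norm_apply_of_bounds {E X : Type*} [NormedAddCommGroup E]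
    [NormedSpace ℝ E] [NormedAddCommGroup X] [NormedSpace ℝ X] (g : E →L[ℝ] X) {A B : ℝ}
    (hA : 0 < A) (hB : 0 ≤ B) (hlow : ∀ t, A * ‖t‖ ≤ ‖g t‖) (hup : ∀ t, ‖g t‖ ≤ B * ‖t‖) :
    ∃ g' : E →L[ℝ] X, (∀ t, ‖t‖ ≤ ‖g' t‖) ∧ ‖g'‖ ≤ B / A := by
  have hnorm (t : E) : ‖(A⁻¹ • g) t‖ = A⁻¹ * ‖g t‖ := by
    rw [smul_apply, norm_smul, Real.norm_of_nonneg (inv_nonneg.2 hA.le)]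
  refine ⟨A⁻¹ • g, fun t => ?_, ContinuousLinearMap.opNorm_le_bound _ (by positivity) fun t => ?_⟩
  · rw [hnorm, le_inv_mul_iff₀ hA]
    exact hlow t
  · rw [hnorm, div_eq_inv_mul, mul_assoc]
    exact mul_le_mul_of_nonneg_left (hup t) (inv_nonneg.2 hA.le)

namespace NullSeq

open Finset

noncomputable def ofTendsto (u : ℕ → ℝ) (hu : Tendsto u atTop (𝓝 0)) : C₀(ℕ, ℝ) :=
  ⟨⟨u, continuous_of_discreteTopology⟩, cocompact_eq_atTop (α := ℕ) ▸ hu⟩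

@[simp] lemma ofTendsto_apply (u : ℕ → ℝ) (hu) (m : ℕ) : ofTendsto u hu m = u m := rfl

lemma tendsto_apply (t : C₀(ℕ, ℝ)) : Tendsto t atTop (𝓝 0) :=
  cocompact_eq_atTop (α := ℕ) ▸ t.zero_at_infty'

lemma tendsto_abs_apply (t : C₀(ℕ, ℝ)) : Tendsto (fun m => |t m|) atTop (𝓝 0) := by
  simpa using (tendsto_apply t).abs

lemma abs_apply_le_norm (t : C₀(ℕ, ℝ)) (m : ℕ) : |t m| ≤ ‖t‖ := by
  simpa [ZeroAtInftyContinuousMap.norm_toBCF_eq_norm] using t.toBCF.norm_coe_le_norm m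

lemma norm_le_of_forall_abs_le {t : C₀(ℕ, ℝ)} {M : ℝ} (hM : 0 ≤ M) (h : ∀ m, |t m| ≤ M) :
    ‖t‖ ≤ M := by
  rw [← ZeroAtInftyContinuousMap.norm_toBCF_eq_norm]
  exact (BoundedContinuousFunction.norm_le hM).2 h

noncomputable def evalCLM (m : ℕ) : C₀(ℕ, ℝ) →L[ℝ] ℝ :=
  LinearMap.mkContinuous
    { toFun := fun t => t m
      map_add' := fun _ _ => rfl
      map_smul' := fun _ _ => rfl }
    1 fun t => by simpa using abs_apply_le_norm t m

lemma sum_apply {ι : Type*} (s : Finset ι) (f : ι → C₀(ℕ, ℝ)) (m : ℕ) :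
    (∑ i ∈ s, f i) m = ∑ i ∈ s, f i m :=
  map_sum (evalCLM m) f s

lemma exists_forall_abs_apply_le (t : C₀(ℕ, ℝ)) : ∃ k, ∀ m, |t m| ≤ |t k| := by
  by_cases h : ∃ k, t k ≠ 0
  · obtain ⟨k, hk⟩ := h
    refine (continuous_of_discreteTopology (f := fun m => |t m|)).exists_forall_ge' k ?_
    rw [cocompact_eq_atTop]
    exact ((tendsto_abs_apply t).eventually (gt_mem_nhds (abs_pos.2 hk))).mono fun _ => le_of_lt
  · push Not at h
    exact ⟨0, fun m => by simp [h]⟩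

noncomputable def single (k : ℕ) : C₀(ℕ, ℝ) :=
  ofTendsto (fun m => if m = k then 1 else 0) (tendsto_const_nhds.congr' <|
    (eventually_gt_atTop k).mono fun _ hm => (if_neg hm.ne').symm)

lemma single_apply (k m : ℕ) : single k m = if m = k then 1 else 0 := rfl

lemma norm_single (k : ℕ) : ‖single k‖ = 1 := by
  refine le_antisymm (norm_le_of_forall_abs_le zero_le_one fun m => ?_) ?_
  · rw [single_apply]; split_ifs <;> simp
  · simpa [single_apply] using abs_apply_le_norm (single k) k

noncomputable def weightedComp (κ : ℕ → ℕ) (hκ : Tendsto κ atTop atTop) (w : ℕ → ℝ)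
    (hw : ∀ m, |w m| ≤ 1) : C₀(ℕ, ℝ) →L[ℝ] C₀(ℕ, ℝ) :=
  LinearMap.mkContinuous
    { toFun := fun t => ofTendsto (fun m => w m * t (κ m)) <|
        squeeze_zero_norm
          (fun m => by simpa [abs_mul] using mul_le_of_le_one_left (abs_nonneg _) (hw m))
          (by simpa using ((tendsto_apply t).comp hκ).norm)
      map_add' := fun a b => by ext m; simp [mul_add]
      map_smul' := fun r a => by ext m; simp [mul_left_comm] }
    1 fun t => by
      rw [one_mul]
      refine norm_le_of_forall_abs_le (norm_nonneg t) fun m => ?_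
      simpa [abs_mul] using
        mul_le_mul (hw m) (abs_apply_le_norm t (κ m)) (abs_nonneg _) zero_le_one

@[simp] lemma weightedComp_apply (κ hκ w hw) (t : C₀(ℕ, ℝ)) (m : ℕ) :
    weightedComp κ hκ w hw t m = w m * t (κ m) := rfl

lemma norm_weightedComp_apply_le (κ hκ w hw) (t : C₀(ℕ, ℝ)) :
    ‖weightedComp κ hκ w hw t‖ ≤ ‖t‖ :=
  ((weightedComp κ hκ w hw).le_opNorm t).trans <|
    mul_le_of_le_one_left (norm_nonneg t) (LinearMap.mkContinuous_norm_le _ zero_le_one _)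

noncomputable def shift : C₀(ℕ, ℝ) →L[ℝ] C₀(ℕ, ℝ) :=
  weightedComp (· - 1) (tendsto_sub_atTop_nat 1) (fun m => if m = 0 then 0 else 1)
    fun m => by split_ifs <;> simp

lemma shift_apply (t : C₀(ℕ, ℝ)) (m : ℕ) : shift t m = if m = 0 then 0 else t (m - 1) := by
  simp [shift, ite_mul]

lemma norm_shift_apply_le (t : C₀(ℕ, ℝ)) : ‖shift t‖ ≤ ‖t‖ :=
  norm_weightedComp_apply_le _ _ _ _ t

lemma norm_shift_pow_apply_le (j : ℕ) (t : C₀(ℕ, ℝ)) : ‖(shift ^ j) t‖ ≤ ‖t‖ := by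
  induction j with
  | zero => simp
  | succ j ih =>
    rw [pow_succ']
    exact (norm_shift_apply_le _).trans ih

lemma shift_pow_single (j k : ℕ) : (shift ^ j) (single k) = single (k + j) := by
  induction j with
  | zero => simp
  | succ j ih =>
    ext m
    rw [pow_succ', ContinuousLinearMap.mul_def, ContinuousLinearMap.comp_apply, ih, shift_apply]
    rcases m with _ | m <;> simp [single_apply, ← add_assoc]

noncomputable def tailProj (n : ℕ) : C₀(ℕ, ℝ) →L[ℝ] C₀(ℕ, ℝ) :=
  weightedComp id tendsto_id (fun m => if n ≤ m then 1 else 0) fun m => by split_ifs <;> simp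

lemma tailProj_apply (n : ℕ) (t : C₀(ℕ, ℝ)) (m : ℕ) :
    tailProj n t m = if n ≤ m then t m else 0 := by
  simp [tailProj, ite_mul]

lemma tailProj_eq_self {n : ℕ} {u : C₀(ℕ, ℝ)} (hu : ∀ m < n, u m = 0) : tailProj n u = u := by
  ext m
  rw [tailProj_apply]
  split_ifs with h
  · rfl
  · exact (hu m (not_le.1 h)).symm

lemma tendsto_tailProj (u : C₀(ℕ, ℝ)) : Tendsto (fun n => tailProj n u) atTop (𝓝 0) := by
  refine NormedAddGroup.tendsto_nhds_zero.2 fun ε hε => ?_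
  obtain ⟨N, hN⟩ := eventually_atTop.1 <|
    (tendsto_abs_apply u).eventually (gt_mem_nhds (half_pos hε))
  refine eventually_atTop.2 ⟨N, fun n hn => ?_⟩
  refine (norm_le_of_forall_abs_le (half_pos hε).le fun m => ?_).trans_lt (half_lt_self hε)
  rw [tailProj_apply]
  split_ifs with h
  · exact (hN m (hn.trans h)).le
  · simpa using (half_pos hε).le

lemma shift_add_one_pow_apply (n : ℕ) (t : C₀(ℕ, ℝ)) (m : ℕ) :
    ((shift + 1) ^ n) t m = ∑ k ∈ range (n + 1), (n.choose k : ℝ) * (shift ^ k) t m := by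
  rw [(Commute.one_right shift).add_pow]
  simp [sum_apply]

lemma norm_shift_add_one_pow_apply_le (n : ℕ) (t : C₀(ℕ, ℝ)) :
    ‖((shift + 1) ^ n) t‖ ≤ 2 ^ n * ‖t‖ := by
  induction n with
  | zero => simp
  | succ n ih =>
    rw [pow_succ', ContinuousLinearMap.mul_def, ContinuousLinearMap.comp_apply,
      add_apply, one_apply_eq_self]
    calc _ ≤ ‖shift (((shift + 1) ^ n) t)‖ + ‖((shift + 1) ^ n) t‖ := norm_add_le _ _
      _ ≤ 2 * (2 ^ n * ‖t‖) := by linarith [norm_shift_apply_le (((shift + 1) ^ n) t)]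
      _ = 2 ^ (n + 1) * ‖t‖ := by ring

lemma norm_shift_add_one_pow_single_zero_le (n : ℕ) :
    ‖((shift + 1) ^ n) (single 0)‖ ≤ n.choose (n / 2) := by
  refine norm_le_of_forall_abs_le (by positivity) fun m => ?_
  simp only [shift_add_one_pow_apply, shift_pow_single, zero_add, single_apply, mul_ite, mul_one,
    mul_zero, sum_ite_eq]
  split_ifs
  · simpa using Nat.choose_le_middle m n
  · simp

lemma norm_shift_add_one_pow_shift_sub_le (n : ℕ) (t : C₀(ℕ, ℝ)) :
    ‖((shift + 1) ^ n) (shift t - t)‖ ≤ 2 * n.choose (n / 2) * ‖t‖ := by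
  refine norm_le_of_forall_abs_le (by positivity) fun m => ?_
  have hpow (k : ℕ) : (shift ^ k) (shift t) = (shift ^ (k + 1)) t := by
    rw [pow_succ]; rfl
  simp only [shift_add_one_pow_apply, map_sub, ZeroAtInftyContinuousMap.sub_apply, hpow, ← mul_sub,
    ← sum_sub_distrib]
  exact abs_sum_choose_mul_sub_le n (fun k => (shift ^ k) t m) fun k =>
    (abs_apply_le_norm _ m).trans (norm_shift_pow_apply_le k t)

-- `(t + T t) / 2` with `T t = single 0 + shift t = (1, t₀, t₁, …)`
noncomputable def avgShift (t : C₀(ℕ, ℝ)) : C₀(ℕ, ℝ) := (2⁻¹ : ℝ) • ((shift + 1) t + single 0)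

lemma avgShift_apply (t : C₀(ℕ, ℝ)) (m : ℕ) :
    avgShift t m = 2⁻¹ * (shift t m + t m + single 0 m) := by
  simp [avgShift]

lemma avgShift_sub_self (t : C₀(ℕ, ℝ)) :
    avgShift t - t = (2⁻¹ : ℝ) • (single 0 + (shift t - t)) := by
  simp only [avgShift, add_apply, one_apply_eq_self]
  module

lemma avgShift_sub (a b : C₀(ℕ, ℝ)) :
    avgShift a - avgShift b = (2⁻¹ : ℝ) • (shift + 1) (a - b) := by
  simp only [avgShift, add_apply, one_apply_eq_self, map_sub]
  module

lemma iterate_avgShift_sub (n : ℕ) (a b : C₀(ℕ, ℝ)) :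
    avgShift^[n] a - avgShift^[n] b = (2⁻¹ ^ n : ℝ) • ((shift + 1) ^ n) (a - b) := by
  induction n with
  | zero => simp
  | succ n ih =>
    rw [Function.iterate_succ_apply', Function.iterate_succ_apply', avgShift_sub, ih, map_smul,
      smul_smul, pow_succ', pow_succ']
    rfl

lemma norm_iterate_avgShift_sub_le (n : ℕ) (a b : C₀(ℕ, ℝ)) :
    ‖avgShift^[n] a - avgShift^[n] b‖ ≤ ‖a - b‖ := by
  rw [iterate_avgShift_sub, norm_smul]
  calc _ ≤ ‖(2⁻¹ ^ n : ℝ)‖ * (2 ^ n * ‖a - b‖) := by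
        gcongr; exact norm_shift_add_one_pow_apply_le n _
    _ = ‖a - b‖ := by simp

lemma norm_iterate_avgShift_succ_sub_le (n : ℕ) (t : C₀(ℕ, ℝ)) :
    ‖avgShift^[n + 1] t - avgShift^[n] t‖ ≤ middleBinomProb n * (1 + 2 * ‖t‖) / 2 := by
  rw [Function.iterate_succ_apply, iterate_avgShift_sub, avgShift_sub_self, map_smul, map_add,
    smul_smul, norm_smul]
  calc _ ≤ ‖(2⁻¹ ^ n * 2⁻¹ : ℝ)‖ * (n.choose (n / 2) + 2 * n.choose (n / 2) * ‖t‖) := by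
        gcongr
        exact (norm_add_le _ _).trans (add_le_add (norm_shift_add_one_pow_single_zero_le n)
          (norm_shift_add_one_pow_shift_sub_le n t))
    _ = middleBinomProb n * (1 + 2 * ‖t‖) / 2 := by
        rw [middleBinomProb, Real.norm_of_nonneg (by positivity), inv_pow]
        field_simp

def unitCube : Set C₀(ℕ, ℝ) := {t | ∀ m, t m ∈ Set.Icc 0 1}

lemma isClosed_unitCube : IsClosed unitCube := by
  simp only [unitCube, ofPred_forall]
  exact isClosed_iInter fun m => isClosed_Icc.preimage (evalCLM m).continuous

lemma convex_unitCube : Convex ℝ unitCube := by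
  simp only [unitCube, ofPred_forall]
  exact convex_iInter fun m => (convex_Icc 0 1).linear_preimage (evalCLM m).toLinearMap

lemma norm_le_one_of_mem_unitCube {t : C₀(ℕ, ℝ)} (ht : t ∈ unitCube) : ‖t‖ ≤ 1 :=
  norm_le_of_forall_abs_le zero_le_one fun m => abs_le.2 ⟨by linarith [(ht m).1], (ht m).2⟩

lemma zero_mem_unitCube : (0 : C₀(ℕ, ℝ)) ∈ unitCube := fun _ => by simp

lemma mapsTo_avgShift_unitCube : MapsTo avgShift unitCube unitCube := by
  intro t ht m
  have h := ht m
  rcases m with _ | m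
  · simp only [avgShift_apply, shift_apply, single_apply, ↓reduceIte, Set.mem_Icc] at h ⊢
    constructor <;> linarith
  · have h' := ht m
    simp only [avgShift_apply, shift_apply, single_apply, Nat.add_one_ne_zero, ↓reduceIte,
      add_tsub_cancel_right, Set.mem_Icc] at h h' ⊢
    constructor <;> linarith

lemma avgShift_ne_self (t : C₀(ℕ, ℝ)) : avgShift t ≠ t := by
  intro h
  have hone : ∀ m, t m = 1 := by
    intro m
    have hm := DFunLike.congr_fun h m
    induction m with
    | zero =>
      simp only [avgShift_apply, shift_apply, single_apply, ↓reduceIte] at hm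
      linarith
    | succ m ih =>
      simp only [avgShift_apply, shift_apply, single_apply, Nat.add_one_ne_zero, ↓reduceIte,
        add_tsub_cancel_right] at hm
      linarith [ih (DFunLike.congr_fun h m)]
  have h1 := tendsto_apply t
  rw [show ⇑t = fun _ => 1 from funext hone] at h1
  exact one_ne_zero (tendsto_nhds_unique tendsto_const_nhds h1)

lemma isBounded_unitCube : Bornology.IsBounded unitCube :=
  isBounded_closedBall.subset fun _ ht => mem_closedBall_zero_iff.2 (norm_le_one_of_mem_unitCube ht)

lemma uniformlyAsymptoticallyRegularOn_avgShift :
    UniformlyAsymptoticallyRegularOn avgShift unitCube := by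
  intro δ hδ
  obtain ⟨N, hN⟩ := eventually_atTop.1 <|
    (tendsto_middleBinomProb.eventually (gt_mem_nhds (by positivity : 0 < δ * (2 / 3))))
  refine ⟨N, fun n hn t ht => (norm_iterate_avgShift_succ_sub_le n t).trans_lt ?_⟩
  have := norm_le_one_of_mem_unitCube ht
  nlinarith [hN n hn, middleBinomProb_nonneg n]

lemma uniformlyLipschitzOn_avgShift (K : Set C₀(ℕ, ℝ)) : UniformlyLipschitzOn 1 avgShift K :=
  fun n y _ z _ => by simpa using norm_iterate_avgShift_sub_le n y z

lemma exists_blockIndex {p : ℕ → ℕ} (hp : StrictMono p) :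
    ∃ κ : ℕ → ℕ, Tendsto κ atTop atTop ∧ ∀ k m, p k ≤ m → m < p (k + 1) → κ m = k := by
  refine ⟨fun m => Nat.findGreatest (fun k => p k ≤ m) m,
    tendsto_atTop_atTop.2 fun k =>
      ⟨p k, fun m hm => Nat.le_findGreatest ((hp.id_le k).trans hm) hm⟩,
    fun k m hkm hmk => le_antisymm ?_ (Nat.le_findGreatest ((hp.id_le k).trans hkm) hkm)⟩
  by_contra! hlt
  have := Nat.findGreatest_spec (P := fun k => p k ≤ m) ((hp.id_le k).trans hkm) hkm
  exact absurd ((hp.monotone hlt).trans this) (not_le.2 hmk)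

lemma exists_blockMap {p : ℕ → ℕ} (hp : StrictMono p) {b : ℕ → C₀(ℕ, ℝ)} (hb : ∀ k, ‖b k‖ ≤ 1)
    (hsupp : ∀ k m, b k m ≠ 0 → p k ≤ m ∧ m < p (k + 1)) :
    ∃ Φ : C₀(ℕ, ℝ) →L[ℝ] C₀(ℕ, ℝ), (∀ t, ‖Φ t‖ ≤ ‖t‖) ∧ (∀ t m, m < p 0 → Φ t m = 0) ∧
      ∀ k, Φ (single k) = b k := by
  obtain ⟨κ, hκ, hκp⟩ := exists_blockIndex hp
  -- `Φ t = ∑ₖ t k • b k`, computed at `m` from the only block `b (κ m)` that can meet `m`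
  have hbκ (k m : ℕ) (hkm : κ m ≠ k) : b k m = 0 := by
    by_contra h
    exact hkm (hκp k m (hsupp k m h).1 (hsupp k m h).2)
  refine ⟨weightedComp κ hκ (fun m => b (κ m) m) fun m => (abs_apply_le_norm _ _).trans (hb _),
    norm_weightedComp_apply_le _ _ _ _, fun t m hm => ?_, fun k => ?_⟩
  · by_contra h
    have := (hsupp _ m (left_ne_zero_of_mul h)).1
    exact absurd ((hp.monotone (Nat.zero_le _)).trans this) (not_le.2 hm)
  · ext m
    simp only [weightedComp_apply, single_apply]
    split_ifs with h
    · rw [h, mul_one]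
    · rw [mul_zero, hbκ k m h]

lemma mul_norm_le_of_le_norm_single {X : Type*} [NormedAddCommGroup X] [NormedSpace ℝ X]
    (g : C₀(ℕ, ℝ) →L[ℝ] X) {a B : ℝ} (hB : ∀ t, ‖g t‖ ≤ B * ‖t‖)
    (ha : ∀ k, a ≤ ‖g (single k)‖) (t : C₀(ℕ, ℝ)) : (2 * a - B) * ‖t‖ ≤ ‖g t‖ := by
  obtain ⟨k, hk⟩ := exists_forall_abs_apply_le t
  have hnorm : ‖t‖ = |t k| :=
    le_antisymm (norm_le_of_forall_abs_le (abs_nonneg _) hk) (abs_apply_le_norm t k)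
  have hB0 : 0 ≤ B := by simpa [norm_single] using (norm_nonneg _).trans (hB (single 0))
  have hrefl : ‖(2 * t k) • single k - t‖ ≤ ‖t‖ := by
    refine norm_le_of_forall_abs_le (norm_nonneg t) fun m => ?_
    simp only [ZeroAtInftyContinuousMap.sub_apply, ZeroAtInftyContinuousMap.smul_apply,
      single_apply, smul_eq_mul]
    split_ifs with h
    · rw [h, hnorm, mul_one, two_mul, add_sub_cancel_right]
    · simpa using abs_apply_le_norm t m
  have hsum : g t + g ((2 * t k) • single k - t) = (2 * t k) • g (single k) := by
    rw [← map_add, add_sub_cancel, map_smul]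
  have := norm_add_le (g t) (g ((2 * t k) • single k - t))
  rw [hsum, norm_smul, Real.norm_eq_abs, abs_mul, abs_two, ← hnorm] at this
  nlinarith [hB ((2 * t k) • single k - t), mul_le_mul_of_nonneg_left hrefl hB0, ha k,
    norm_nonneg t]

section TailNorm

variable {X : Type*} [NormedAddCommGroup X] [NormedSpace ℝ X] (f : C₀(ℕ, ℝ) →L[ℝ] X)

noncomputable def tailNorm (n : ℕ) : ℝ := ‖f ∘L tailProj n‖

lemma norm_apply_le_tailNorm {n : ℕ} {u : C₀(ℕ, ℝ)} (hu : ∀ m < n, u m = 0) :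
    ‖f u‖ ≤ tailNorm f n * ‖u‖ := by
  simpa [tailNorm, tailProj_eq_self hu] using (f ∘L tailProj n).le_opNorm u

lemma le_tailNorm {c : ℝ} (hfc : ∀ u, c * ‖u‖ ≤ ‖f u‖) (n : ℕ) : c ≤ tailNorm f n := by
  simpa [norm_single] using
    (hfc (single n)).trans (norm_apply_le_tailNorm f fun m hm => if_neg hm.ne)

lemma exists_block_of_lt_tailNorm {r : ℝ} {n : ℕ} (hr : r < tailNorm f n) :
    ∃ M, n < M ∧ ∃ b : C₀(ℕ, ℝ), ‖b‖ ≤ 1 ∧ r < ‖f b‖ ∧ ∀ m, b m ≠ 0 → n ≤ m ∧ m < M := by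
  obtain ⟨u, hu, hru⟩ := (f ∘L tailProj n).exists_lt_apply_of_lt_opNorm hr
  set v := tailProj n u
  have hlim : Tendsto (fun M => v - tailProj M v) atTop (𝓝 v) := by
    simpa only [sub_zero] using (tendsto_tailProj v).const_sub v
  obtain ⟨M, hMr, hnM⟩ := ((((f.continuous.tendsto v).comp hlim).norm.eventually
    (lt_mem_nhds hru)).and (eventually_gt_atTop n)).exists
  have happly (m : ℕ) : (v - tailProj M v) m = if n ≤ m ∧ m < M then u m else 0 := by
    simp only [ZeroAtInftyContinuousMap.sub_apply, tailProj_apply, v]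
    split_ifs <;> first | (exfalso; omega) | simp
  refine ⟨M, hnM, v - tailProj M v, ?_, hMr, fun m hm => ?_⟩
  · refine norm_le_of_forall_abs_le zero_le_one fun m => ?_
    rw [happly]
    split_ifs
    · exact ((abs_apply_le_norm u m).trans hu.le)
    · simp
  · rw [happly] at hm
    split_ifs at hm with h
    · exact h
    · exact (hm rfl).elim

lemma exists_blocks {r : ℝ} (h : ∀ n, r < tailNorm f n) (n₀ : ℕ) :
    ∃ (p : ℕ → ℕ) (b : ℕ → C₀(ℕ, ℝ)), StrictMono p ∧ p 0 = n₀ ∧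
      ∀ k, ‖b k‖ ≤ 1 ∧ r < ‖f (b k)‖ ∧ ∀ m, b k m ≠ 0 → p k ≤ m ∧ m < p (k + 1) := by
  choose P hP b hb using fun n => exists_block_of_lt_tailNorm f (h n)
  have hsucc (k : ℕ) : P^[k + 1] n₀ = P (P^[k] n₀) := Function.iterate_succ_apply' _ _ _
  refine ⟨fun k => P^[k] n₀, fun k => b (P^[k] n₀),
    strictMono_nat_of_lt_succ fun k => hsucc k ▸ hP _, rfl, fun k => ?_⟩
  simpa only [hsucc] using hb (P^[k] n₀)

end TailNorm

theorem exists_almostIsometry {X : Type*} [NormedAddCommGroup X] [NormedSpace ℝ X]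
    (hc0 : ∃ (f : C₀(ℕ, ℝ) →L[ℝ] X) (c : ℝ), 0 < c ∧ ∀ u : C₀(ℕ, ℝ), c * ‖u‖ ≤ ‖f u‖)
    {ε : ℝ} (hε : 0 < ε) : ∃ g : C₀(ℕ, ℝ) →L[ℝ] X, (∀ t, ‖t‖ ≤ ‖g t‖) ∧ ‖g‖ ≤ 1 + ε := by
  obtain ⟨f, c, hc, hfc⟩ := hc0
  set σ := ⨅ n, tailNorm f n
  have hbdd : BddBelow (Set.range (tailNorm f)) := ⟨c, forall_mem_range.2 (le_tailNorm f hfc)⟩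
  have hσ : 0 < σ := hc.trans_le (le_ciInf (le_tailNorm f hfc))
  -- `(1 + δ) / (1 - 3 * δ) = 1 + ε`
  set δ := ε / (4 + 3 * ε)
  have hδ : δ * (4 + 3 * ε) = ε := div_mul_cancel₀ _ (by positivity)
  have hδ0 : 0 < δ := by positivity
  obtain ⟨n₀, hn₀⟩ : ∃ n, tailNorm f n < σ * (1 + δ) := exists_lt_of_ciInf_lt (by nlinarith)
  obtain ⟨p, b, hp, hp0, hb⟩ := exists_blocks f (r := σ * (1 - δ))
    (fun n => (by nlinarith : σ * (1 - δ) < σ).trans_le (ciInf_le hbdd n)) n₀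
  obtain ⟨Φ, hΦ, hΦ0, hΦb⟩ := exists_blockMap hp (fun k => (hb k).1) (fun k => (hb k).2.2)
  have hs : 0 ≤ tailNorm f n₀ := hc.le.trans (le_tailNorm f hfc n₀)
  have hup (t : C₀(ℕ, ℝ)) : ‖(f ∘L Φ) t‖ ≤ tailNorm f n₀ * ‖t‖ :=
    (norm_apply_le_tailNorm f fun m hm => hΦ0 t m (hp0 ▸ hm)).trans
      (mul_le_mul_of_nonneg_left (hΦ t) hs)
  have hlow := mul_norm_le_of_le_norm_single (f ∘L Φ) hup
    (fun k => by simpa [hΦb] using (hb k).2.1.le)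
  have hA : 0 < 2 * (σ * (1 - δ)) - tailNorm f n₀ := by nlinarith
  obtain ⟨g, hg, hgn⟩ := (f ∘L Φ).exists_le_norm_apply_of_bounds hA hs hlow hup
  refine ⟨g, hg, hgn.trans ((div_le_iff₀ hA).2 ?_)⟩
  nlinarith [mul_lt_mul_of_pos_left hn₀ (by positivity : (0 : ℝ) < 2 + ε)]

end NullSeq

theorem statement9_general {X : Type*} [NormedAddCommGroup X] [NormedSpace ℝ X]
    (hc0 : ∃ (f : C₀(ℕ, ℝ) →L[ℝ] X) (c : ℝ), 0 < c ∧ ∀ u : C₀(ℕ, ℝ), c * ‖u‖ ≤ ‖f u‖)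
    (ε : ℝ) (hε : ε ∈ Set.Ioo (0 : ℝ) 1) :
    ∃ (K : Set X) (F : X → X),
      K.Nonempty ∧ Bornology.IsBounded K ∧ IsClosed K ∧ Convex ℝ K ∧
      Set.MapsTo F K K ∧
      (∀ y ∈ K, F y ≠ y) ∧
      (∀ δ : ℝ, 0 < δ → ∃ N : ℕ, ∀ n : ℕ, N ≤ n → ∀ y ∈ K,
        ‖F^[n + 1] y - F^[n] y‖ < δ) ∧
      (∀ n : ℕ, ∀ y ∈ K, ∀ z ∈ K, ‖F^[n] y - F^[n] z‖ ≤ (1 + ε) * ‖y - z‖) := by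
  obtain ⟨g, hg, hgn⟩ := NullSeq.exists_almostIsometry hc0 hε.1
  have hanti : AntilipschitzWith 1 g := g.antilipschitz_of_bound (by simpa using hg)
  exact ⟨g '' NullSeq.unitCube, conjMap g NullSeq.avgShift,
    ⟨g 0, 0, NullSeq.zero_mem_unitCube, rfl⟩,
    g.lipschitz.isBounded_image NullSeq.isBounded_unitCube,
    (hanti.isClosedEmbedding g.uniformContinuous).isClosedMap _ NullSeq.isClosed_unitCube,
    NullSeq.convex_unitCube.linear_image g.toLinearMap,
    NullSeq.mapsTo_avgShift_unitCube.conjMap hanti.injective,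
    conjMap_ne_self hanti.injective fun t _ => NullSeq.avgShift_ne_self t,
    NullSeq.uniformlyAsymptoticallyRegularOn_avgShift.conjMap hanti.injective g.uniformContinuous,
    (NullSeq.uniformlyLipschitzOn_avgShift _).conjMap hg zero_le_one (by simpa using hgn)⟩

/-- Let `X` be a real Banach space containing an isomorphic copy of `c₀`.
Then for every `ε ∈ (0,1)` there exist a nonempty bounded closed convex set `K ⊆ X` and a
fixed-point-free map `F : K → K` that is uniformly asymptotically regular and uniformly
`(1+ε)`-Lipschitz. -/
theorem statement9 {X : Type*} [NormedAddCommGroup X] [NormedSpace ℝ X] [CompleteSpace X]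
    (hc0 : ∃ (f : C₀(ℕ, ℝ) →L[ℝ] X) (c : ℝ), 0 < c ∧ ∀ u : C₀(ℕ, ℝ), c * ‖u‖ ≤ ‖f u‖)
    (ε : ℝ) (hε : ε ∈ Set.Ioo (0 : ℝ) 1) :
    ∃ (K : Set X) (F : X → X),
      K.Nonempty ∧ Bornology.IsBounded K ∧ IsClosed K ∧ Convex ℝ K ∧
      Set.MapsTo F K K ∧
      (∀ y ∈ K, F y ≠ y) ∧
      (∀ δ : ℝ, 0 < δ → ∃ N : ℕ, ∀ n : ℕ, N ≤ n → ∀ y ∈ K,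
        ‖F^[n + 1] y - F^[n] y‖ < δ) ∧
      (∀ n : ℕ, ∀ y ∈ K, ∀ z ∈ K, ‖F^[n] y - F^[n] z‖ ≤ (1 + ε) * ‖y - z‖) :=
  statement9_general hc0 ε hε
end
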